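/- arXiv:2310.14991 — 8 statements merged into one kernel-verified Lean document; each statement's English description precedes it below -/
import Mathlib

section
/- Let n, k ∈ ℕ with 1 < k < n and k - (k mod 2) ≥ 2√n (equivalently, (k - k mod 2)² ≥ 4n). Then there exists an (n,k)-selection mechanism that is impartial and α-optimal with α = (k - k mod 2) / (k · ⌈2n / (k - k mod 2)⌉). -/
open Finset

/-- A valid weight matrix: nonnegative entries and zero diagonal. -/
def IsValidMatrix {n : ℕ} (A : Matrix (Fin n) (Fin n) ℝ) : Prop :=
  (∀ i j, 0 ≤ A i j) ∧ ∀ i, A i i = 0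

/-- Score of a subset `S` of agents: total weight of votes received by members of `S`. -/
def score {n : ℕ} (A : Matrix (Fin n) (Fin n) ℝ) (S : Finset (Fin n)) : ℝ :=
  ∑ i : Fin n, ∑ j ∈ S, A i j

/-- The maximum score over all subsets of cardinality `k`. -/
noncomputable def optScore {n : ℕ} (k : ℕ) (A : Matrix (Fin n) (Fin n) ℝ) : ℝ :=
  sSup {x : ℝ | ∃ S : Finset (Fin n), S.card = k ∧ score A S = x}

/-- Impartiality: an agent cannot influence its own selection. -/
def Impartial {n : ℕ} (f : Matrix (Fin n) (Fin n) ℝ → Finset (Fin n)) : Prop :=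
  ∀ A A' : Matrix (Fin n) (Fin n) ℝ, IsValidMatrix A → IsValidMatrix A' →
    ∀ i : Fin n, (∀ i', i' ≠ i → A i' = A' i') → (i ∈ f A ↔ i ∈ f A')

/-- `α`-optimality of an `(n,k)`-selection mechanism. -/
def AlphaOptimal {n : ℕ} (k : ℕ) (f : Matrix (Fin n) (Fin n) ℝ → Finset (Fin n))
    (α : ℝ) : Prop :=
  ∀ A : Matrix (Fin n) (Fin n) ℝ, IsValidMatrix A → α * optScore k A ≤ score A (f A)

/-!
Put agent `i` in cell `(i / g, i % g)` of a `g × g` grid, `g = ⌊k/2⌋`, so that `n ≤ g²`.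
Every column elects its top agent by the votes it receives from outside the column, and every
wrapped diagonal elects its top agent by the votes it receives from inside its own column.
A column and a diagonal share at most one cell, so no agent's votes enter a contest the agent
takes part in. Every column and diagonal holds at most `p = ⌈n/g⌉` agents, and a block maximum
is at least the block average, so the `2g ≤ k` winners collect at least a `1/p` fraction of all
votes, which bounds the optimum.
-/

theorem score_nonneg {n : ℕ} {A : Matrix (Fin n) (Fin n) ℝ} (hA : ∀ i j, 0 ≤ A i j)
    (S : Finset (Fin n)) : 0 ≤ score A S :=
  sum_nonneg fun i _ => sum_nonneg fun j _ => hA i j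

theorem score_eq_sum_sum {n : ℕ} (A : Matrix (Fin n) (Fin n) ℝ) (S : Finset (Fin n)) :
    score A S = ∑ j ∈ S, ∑ i, A i j :=
  sum_comm

theorem optScore_nonneg {n k : ℕ} {A : Matrix (Fin n) (Fin n) ℝ} (hA : ∀ i j, 0 ≤ A i j) :
    0 ≤ optScore k A :=
  Real.sSup_nonneg <| by
    rintro _ ⟨S, -, rfl⟩
    exact score_nonneg hA S

theorem optScore_le_sum {n k : ℕ} {A : Matrix (Fin n) (Fin n) ℝ} (hA : ∀ i j, 0 ≤ A i j) :
    optScore k A ≤ ∑ j, ∑ i, A i j := by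
  refine Real.sSup_le ?_ (sum_nonneg fun j _ => sum_nonneg fun i _ => hA i j)
  rintro _ ⟨S, -, rfl⟩
  rw [score_eq_sum_sum]
  exact sum_le_sum_of_subset_of_nonneg (subset_univ S) fun j _ _ =>
    sum_nonneg fun i _ => hA i j

theorem AlphaOptimal.mono {n k : ℕ} {f : Matrix (Fin n) (Fin n) ℝ → Finset (Fin n)}
    {α β : ℝ} (hf : AlphaOptimal k f β) (hαβ : α ≤ β) : AlphaOptimal k f α :=
  fun A hA => (mul_le_mul_of_nonneg_right hαβ (optScore_nonneg hA.1)).trans (hf A hA)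

namespace ImpartialSelection

section BlockMax

open OrderDual (toDual)

variable {ι β : Type*} [LinearOrder ι]

/-- Ties are broken towards the smaller index, so that every block has exactly one maximum. -/
def IsBlockMax (e : ι → ℝ) (idx : ι → β) (j : ι) : Prop :=
  ∀ i, idx i = idx j → toLex (e i, toDual i) ≤ toLex (e j, toDual j)

noncomputable instance [Fintype ι] [DecidableEq β] (e : ι → ℝ) (idx : ι → β) :
    DecidablePred (IsBlockMax e idx) :=
  fun _ => by unfold IsBlockMax; infer_instance

variable {e e' : ι → ℝ} {idx : ι → β}

theorem IsBlockMax.le {i j : ι} (hj : IsBlockMax e idx j) (h : idx i = idx j) : e i ≤ e j :=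
  Prod.Lex.monotone_fst _ _ (hj i h)

theorem IsBlockMax.eq_of_idx_eq {i j : ι} (hi : IsBlockMax e idx i) (hj : IsBlockMax e idx j)
    (h : idx i = idx j) : i = j := by
  simpa using congrArg (fun x => (ofLex x).2) (le_antisymm (hi j h.symm) (hj i h)).symm

theorem isBlockMax_congr {j : ι} (h : ∀ u, idx u = idx j → e u = e' u) :
    IsBlockMax e idx j ↔ IsBlockMax e' idx j :=
  forall_congr' fun i => imp_congr_right fun hi => by rw [h i hi, h j rfl]

variable [Fintype ι]

theorem exists_isBlockMax [DecidableEq β] (e : ι → ℝ) {l : β} (hl : ∃ i, idx i = l) :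
    ∃ b, idx b = l ∧ IsBlockMax e idx b := by
  obtain ⟨b, hb, hmax⟩ := exists_max_image {i | idx i = l}
    (fun i => toLex (e i, toDual i)) (by simpa [Finset.Nonempty] using hl)
  rw [mem_filter] at hb
  exact ⟨b, hb.2, fun i hi => hmax i (by simp [hi, hb.2])⟩

theorem card_filter_isBlockMax_le [DecidableEq β] (e : ι → ℝ) {T : Finset β}
    (hT : ∀ j, idx j ∈ T) : #{j | IsBlockMax e idx j} ≤ #T :=
  card_le_card_of_injOn idx (fun j _ => hT j) fun _ hi _ hj h =>
    (mem_filter.1 hi).2.eq_of_idx_eq (mem_filter.1 hj).2 h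

theorem mul_sum_block_le_sum_isBlockMax [DecidableEq β] (he : ∀ j, 0 ≤ e j) {c : ℝ}
    (hc : 0 ≤ c) {l : β} (hl : c * #{i | idx i = l} ≤ 1) :
    c * ∑ j with idx j = l, e j ≤ ∑ j ∈ {j | IsBlockMax e idx j} with idx j = l, e j := by
  by_cases hne : ∃ i, idx i = l
  · obtain ⟨b, rfl, hb⟩ := exists_isBlockMax e hne
    calc c * ∑ j with idx j = idx b, e j
        ≤ c * (#{j | idx j = idx b} * e b) := by
          gcongr
          simpa using sum_le_card_nsmul _ e (e b) fun j hj => hb.le (mem_filter.1 hj).2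
      _ = c * #{j | idx j = idx b} * e b := by ring
      _ ≤ e b := mul_le_of_le_one_left (he b) hl
      _ ≤ _ := single_le_sum (fun j _ => he j) (by simp [hb])
  · push Not at hne
    rw [filter_false_of_mem fun j _ => hne j, sum_empty, mul_zero]
    exact sum_nonneg fun j _ => he j

theorem mul_sum_le_sum_isBlockMax [DecidableEq β] (he : ∀ j, 0 ≤ e j) {c : ℝ} (hc : 0 ≤ c)
    (hcard : ∀ l, c * #{i | idx i = l} ≤ 1) :
    c * ∑ j, e j ≤ ∑ j with IsBlockMax e idx j, e j := by
  have hmaps : ∀ s : Finset ι, ∀ j ∈ s, idx j ∈ univ.image idx :=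
    fun _ j _ => mem_image_of_mem idx (mem_univ j)
  rw [← sum_fiberwise_of_maps_to (hmaps univ), ← sum_fiberwise_of_maps_to (hmaps _), mul_sum]
  exact sum_le_sum fun l _ => mul_sum_block_le_sum_isBlockMax he hc (hcard l)

end BlockMax

section Grid

variable {n g p : ℕ}

def gridCol (g : ℕ) (i : Fin n) : ℕ := i % g

/-- The wrapped diagonal through the cell `(i / g, i % g)`. -/
def gridRow (g : ℕ) (i : Fin n) : ℕ := (i % g + i / g) % g

theorem eq_of_gridCol_eq_of_gridRow_eq (hng : n ≤ g * g) {i j : Fin n}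
    (hc : gridCol g i = gridCol g j) (hr : gridRow g i = gridRow g j) : i = j := by
  have hg : 0 < g := Nat.pos_of_ne_zero fun hg => by have := i.2; simp_all
  have hq : ∀ m : Fin n, m / g < g := fun m => (Nat.div_lt_iff_lt_mul hg).2 (m.2.trans_le hng)
  unfold gridCol gridRow at *
  rw [hc] at hr
  exact Fin.ext <| Nat.ext_div_mod
    ((Nat.ModEq.add_left_cancel' _ hr).eq_of_lt_of_lt (hq i) (hq j)) hc

theorem card_le_of_injOn_div (hnp : n ≤ g * p) {s : Finset (Fin n)}
    (hs : Set.InjOn (fun i : Fin n => (i : ℕ) / g) s) : #s ≤ p := by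
  simpa using card_le_card_of_injOn (t := range p) _
    (fun i _ => mem_range.2 (Nat.div_lt_of_lt_mul (i.2.trans_le hnp))) hs

theorem card_gridCol_le (hnp : n ≤ g * p) (l : ℕ) : #{i : Fin n | gridCol g i = l} ≤ p :=
  card_le_of_injOn_div hnp fun _ hi _ hj h =>
    Fin.ext <| Nat.ext_div_mod h ((mem_filter.1 hi).2.trans (mem_filter.1 hj).2.symm)

theorem card_gridRow_le (hnp : n ≤ g * p) (l : ℕ) : #{i : Fin n | gridRow g i = l} ≤ p := by
  refine card_le_of_injOn_div hnp fun i hi j hj (h : (i : ℕ) / g = j / g) => ?_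
  have hg : 0 < g := Nat.pos_of_ne_zero fun hg => by have := i.2; simp_all
  have hr : (i % g + i / g) % g = (j % g + j / g) % g :=
    (mem_filter.1 hi).2.trans (mem_filter.1 hj).2.symm
  rw [h] at hr
  exact Fin.ext <| Nat.ext_div_mod h
    ((Nat.ModEq.add_right_cancel' _ hr).eq_of_lt_of_lt (Nat.mod_lt _ hg) (Nat.mod_lt _ hg))

end Grid

section Mechanism

variable {n : ℕ}

noncomputable def crossVotes (g : ℕ) (A : Matrix (Fin n) (Fin n) ℝ) (j : Fin n) : ℝ :=
  ∑ i with gridCol g i ≠ gridCol g j, A i j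

noncomputable def columnVotes (g : ℕ) (A : Matrix (Fin n) (Fin n) ℝ) (j : Fin n) : ℝ :=
  ∑ i with gridCol g i = gridCol g j ∧ i ≠ j, A i j

noncomputable def gridMechanism (g : ℕ) (A : Matrix (Fin n) (Fin n) ℝ) : Finset (Fin n) :=
  {j | IsBlockMax (crossVotes g A) (gridCol g) j ∨ IsBlockMax (columnVotes g A) (gridRow g) j}

variable {g : ℕ}

theorem crossVotes_add_columnVotes {A : Matrix (Fin n) (Fin n) ℝ} (hA : ∀ i, A i i = 0)
    (j : Fin n) : crossVotes g A j + columnVotes g A j = ∑ i, A i j := by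
  simp only [crossVotes, columnVotes, sum_filter, ← sum_add_distrib]
  refine sum_congr rfl fun i _ => ?_
  by_cases hij : i = j
  · simp [hij, hA]
  · by_cases hc : gridCol g i = gridCol g j <;> simp [hc, hij]

theorem card_gridMechanism_le (hg : 0 < g) (A : Matrix (Fin n) (Fin n) ℝ) :
    #(gridMechanism g A) ≤ 2 * g := by
  have hcol : ∀ j : Fin n, gridCol g j ∈ range g := fun j => mem_range.2 (Nat.mod_lt _ hg)
  have hrow : ∀ j : Fin n, gridRow g j ∈ range g := fun j => mem_range.2 (Nat.mod_lt _ hg)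
  calc #(gridMechanism g A)
      ≤ #{j | IsBlockMax (crossVotes g A) (gridCol g) j}
        + #{j | IsBlockMax (columnVotes g A) (gridRow g) j} := by
        rw [gridMechanism, filter_or]
        exact card_union_le _ _
    _ ≤ #(range g) + #(range g) :=
        add_le_add (card_filter_isBlockMax_le _ hcol) (card_filter_isBlockMax_le _ hrow)
    _ = 2 * g := by rw [card_range, two_mul]

theorem impartial_gridMechanism (hng : n ≤ g * g) : Impartial (gridMechanism (n := n) g) := by
  intro A A' _ _ i hrows
  simp only [gridMechanism, mem_filter, mem_univ, true_and]
  refine or_congr (isBlockMax_congr fun u hu => ?_) (isBlockMax_congr fun u hu => ?_)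
  · refine sum_congr rfl fun v hv => ?_
    rw [hrows v (by rintro rfl; exact (mem_filter.1 hv).2 hu.symm)]
  · refine sum_congr rfl fun v hv => ?_
    obtain ⟨hvc, hvu⟩ := (mem_filter.1 hv).2
    rw [hrows v (by rintro rfl; exact hvu (eq_of_gridCol_eq_of_gridRow_eq hng hvc hu.symm))]

theorem alphaOptimal_gridMechanism {p : ℕ} (hnp : n ≤ g * p) (k : ℕ) :
    AlphaOptimal k (gridMechanism (n := n) g) (p : ℝ)⁻¹ := by
  intro A hA
  have hp : (0 : ℝ) ≤ (p : ℝ)⁻¹ := by positivity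
  have hcard : ∀ s : Finset (Fin n), #s ≤ p → (p : ℝ)⁻¹ * #s ≤ 1 := fun s hs =>
    inv_mul_le_one_of_le₀ (by exact_mod_cast hs) (Nat.cast_nonneg p)
  have hvotes : ∀ j, 0 ≤ crossVotes g A j ∧ 0 ≤ columnVotes g A j := fun j =>
    ⟨sum_nonneg fun i _ => hA.1 i j, sum_nonneg fun i _ => hA.1 i j⟩
  calc (p : ℝ)⁻¹ * optScore k A
      ≤ (p : ℝ)⁻¹ * ∑ j, ∑ i, A i j :=
        mul_le_mul_of_nonneg_left (optScore_le_sum hA.1) hp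
    _ = (p : ℝ)⁻¹ * ∑ j, crossVotes g A j + (p : ℝ)⁻¹ * ∑ j, columnVotes g A j := by
        rw [← mul_add, ← sum_add_distrib]
        simp only [crossVotes_add_columnVotes hA.2]
    _ ≤ ∑ j with IsBlockMax (crossVotes g A) (gridCol g) j, crossVotes g A j
        + ∑ j with IsBlockMax (columnVotes g A) (gridRow g) j, columnVotes g A j :=
        add_le_add
          (mul_sum_le_sum_isBlockMax (fun j => (hvotes j).1) hp
            fun l => hcard _ (card_gridCol_le hnp l))
          (mul_sum_le_sum_isBlockMax (fun j => (hvotes j).2) hp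
            fun l => hcard _ (card_gridRow_le hnp l))
    _ ≤ ∑ j ∈ gridMechanism g A, crossVotes g A j
        + ∑ j ∈ gridMechanism g A, columnVotes g A j :=
        add_le_add
          (sum_le_sum_of_subset_of_nonneg (monotone_filter_right _ fun _ _ => Or.inl)
            fun j _ _ => (hvotes j).1)
          (sum_le_sum_of_subset_of_nonneg (monotone_filter_right _ fun _ _ => Or.inr)
            fun j _ _ => (hvotes j).2)
    _ = score A (gridMechanism g A) := by
        rw [← sum_add_distrib, score_eq_sum_sum]
        exact sum_congr rfl fun j _ => crossVotes_add_columnVotes hA.2 j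

end Mechanism

end ImpartialSelection

open ImpartialSelection in
theorem stmt0_general (n k : ℕ) (h1 : 1 < k) (h3 : 4 * n ≤ (k - k % 2) ^ 2) :
    ∃ f : Matrix (Fin n) (Fin n) ℝ → Finset (Fin n),
      (∀ A, (f A).card ≤ k) ∧ Impartial f ∧
      AlphaOptimal k f
        (((k - k % 2 : ℕ) : ℝ) /
          ((k : ℝ) * ((⌈(2 * (n : ℝ)) / ((k - k % 2 : ℕ) : ℝ)⌉ : ℤ) : ℝ))) := by
  obtain ⟨g, hk⟩ : ∃ g, k - k % 2 = 2 * g := ⟨k / 2, by omega⟩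
  have hg : 0 < g := by omega
  have hng : n ≤ g * g := by rw [hk] at h3; nlinarith
  rw [hk, ← Int.natCast_ceil_eq_ceil (by positivity), Int.cast_natCast]
  set p := ⌈2 * (n : ℝ) / ((2 * g : ℕ) : ℝ)⌉₊ with hp
  have hnp : n ≤ g * p := by
    have := Nat.le_ceil (2 * (n : ℝ) / ((2 * g : ℕ) : ℝ))
    rw [← hp, div_le_iff₀ (by positivity)] at this
    exact_mod_cast (by push_cast at this; linarith : (n : ℝ) ≤ g * p)
  refine ⟨gridMechanism g, fun A => (card_gridMechanism_le hg A).trans (by omega),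
    impartial_gridMechanism hng, (alphaOptimal_gridMechanism hnp k).mono ?_⟩
  rw [div_mul_eq_div_div, div_eq_mul_inv _ (p : ℝ)]
  exact mul_le_of_le_one_left (by positivity)
    (div_le_one_of_le₀ (by exact_mod_cast (by omega : 2 * g ≤ k)) (Nat.cast_nonneg k))

/-- Deterministic impartial selection with weights: for `1 < k < n` and
`k - k % 2 ≥ 2√n`, there exists an impartial `(n,k)`-selection mechanism that is
`α`-optimal with `α = (k - k % 2) / (k * ⌈2n / (k - k % 2)⌉)`. -/
theorem stmt0 (n k : ℕ) (h1 : 1 < k) (h2 : k < n) (h3 : 4 * n ≤ (k - k % 2) ^ 2) :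
    ∃ f : Matrix (Fin n) (Fin n) ℝ → Finset (Fin n),
      (∀ A, (f A).card ≤ k) ∧ Impartial f ∧
      AlphaOptimal k f
        (((k - k % 2 : ℕ) : ℝ) /
          ((k : ℝ) * ((⌈(2 * (n : ℝ)) / ((k - k % 2 : ℕ) : ℝ)⌉ : ℤ) : ℝ))) :=
  stmt0_general n k h1 h3
end

section
/- Let n, k ∈ ℕ with k < n be such that b := 2n/k is a natural number, k is even, and b ≤ k/2. Then there exist finite sets S₂¹, …, S₂ᵏ ⊆ [n] (with voter sets S₁ᵖ := [n] \ S₂ᵖ) such that: (i) |S₂ᵖ| = b for all p ∈ [k]; (ii) |S₂ᵖ ∩ S₂^q| ≤ 1 for all p ≠ q in [k]; (iii) every agent v ∈ [n] satisfies |{ p ∈ [k] | v ∈ S₂ᵖ }| = 2; and (iv) for every U ⊆ [n] there is a partition U = U₁ ⊔ ⋯ ⊔ U_b into b (possibly empty) pairwise disjoint parts such that for every t ∈ [b], no two distinct elements of U_t belong to a common set S₂ᵖ, p ∈ [k]. -/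
open Finset

/-- Existence of a robust balanced partition system: for `k < n` with
`b := 2n/k ∈ ℕ`, `k` even and `b ≤ k/2`, there are `k` candidate sets
`S₂ p ⊆ Fin n` such that (i) each has cardinality `b`, (ii) any two distinct ones
intersect in at most one agent, (iii) every agent lies in exactly two of them, and
(iv) every `U ⊆ Fin n` can be partitioned into `b` pairwise disjoint parts such
that no two distinct agents of a common part lie in a common candidate set. -/
theorem stmt5 (n k : ℕ) (hkn : k < n) (hdvd : k ∣ 2 * n) (hk2 : k % 2 = 0)
    (hble : 2 * n / k ≤ k / 2) :
    ∃ S₂ : Fin k → Finset (Fin n),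
      (∀ p, (S₂ p).card = 2 * n / k) ∧
      (∀ p q, p ≠ q → (S₂ p ∩ S₂ q).card ≤ 1) ∧
      (∀ v : Fin n, (Finset.univ.filter (fun p => v ∈ S₂ p)).card = 2) ∧
      (∀ U : Finset (Fin n), ∃ Upart : Fin (2 * n / k) → Finset (Fin n),
        (∀ t t', t ≠ t' → Disjoint (Upart t) (Upart t')) ∧
        (Finset.univ.biUnion Upart = U) ∧
        (∀ t, ∀ u ∈ Upart t, ∀ v ∈ Upart t, u ≠ v → ∀ p, u ∈ S₂ p → v ∉ S₂ p)) := by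
  have hk0 : 0 < k := by
    rcases Nat.eq_zero_or_pos k with h | h
    · subst h; simp at hdvd; omega
    · exact h
  obtain ⟨m, hm⟩ : ∃ m, k = 2 * m := ⟨k / 2, by omega⟩
  obtain ⟨b, hb⟩ : ∃ b, 2 * n = k * b := hdvd
  have hbval : 2 * n / k = b := by rw [hb]; exact Nat.mul_div_cancel_left b hk0
  have hn : n = m * b := by
    have h2 : 2 * n = 2 * (m * b) := by rw [hb, hm]; ring
    omega
  have hm0 : 0 < m := by omega
  have hb0 : 0 < b := by
    rcases Nat.eq_zero_or_pos b with h | h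
    · subst h; simp at hn; omega
    · exact h
  have hbm : b ≤ m := by omega
  -- coordinates
  set L : Fin n → ℕ := fun v => v.val / b with hL
  set C : Fin n → ℕ := fun v => v.val % b with hC
  set R : Fin n → ℕ := fun v => (L v + C v) % m with hR
  have hLlt : ∀ v, L v < m := by
    intro v
    have : v.val < m * b := by rw [← hn]; exact v.isLt
    exact Nat.div_lt_iff_lt_mul hb0 |>.mpr (by omega)
  have hClt : ∀ v, C v < b := fun v => Nat.mod_lt _ hb0
  have hRlt : ∀ v, R v < m := fun v => Nat.mod_lt _ hm0
  have hvdec : ∀ v : Fin n, b * L v + C v = v.val := fun v => Nat.div_add_mod v.val b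
  have hveq : ∀ v w : Fin n, L v = L w → C v = C w → v = w := by
    intro v w h1 h2
    have d1 := hvdec v; have d2 := hvdec w
    rw [h1, h2] at d1
    exact Fin.ext (by omega)
  -- mod arithmetic helpers
  have addmod : ∀ a c : ℕ, (a % m + c) % m = (a + c) % m := by
    intro a c
    exact Nat.ModEq.add_right c (Nat.mod_modEq a m)
  have modcancel : ∀ i c c' : ℕ, c < m → c' < m → (i + c) % m = (i + c') % m → c = c' := by
    intro i c c' hc hc' h
    have h2 : c ≡ c' [MOD m] := Nat.ModEq.add_left_cancel' i h
    have := h2.eq_of_lt_of_lt hc hc'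
    exact this
  -- the construction
  set ip : Fin k → Fin b → ℕ := fun p c =>
    if p.val < m then p.val else (p.val - m + (m - c.val)) % m with hip
  have hiplt : ∀ p c, ip p c < m := by
    intro p c
    simp only [hip]
    split
    · assumption
    · exact Nat.mod_lt _ hm0
  set f : Fin k → Fin b → Fin n := fun p c =>
    ⟨b * ip p c + c.val, by
      have h1 := hiplt p c
      have hc := c.isLt
      calc b * ip p c + c.val < b * ip p c + b := by omega
        _ = b * (ip p c + 1) := by ring
        _ ≤ b * m := Nat.mul_le_mul_left b (by omega)
        _ = n := by rw [hn]; ring⟩ with hf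
  have hLf : ∀ p c, L (f p c) = ip p c := by
    intro p c
    show (b * ip p c + c.val) / b = ip p c
    rw [Nat.mul_add_div hb0, Nat.div_eq_of_lt c.isLt]
    omega
  have hCf : ∀ p c, C (f p c) = c.val := by
    intro p c
    show (b * ip p c + c.val) % b = c.val
    rw [Nat.mul_add_mod, Nat.mod_eq_of_lt c.isLt]
  set S : Fin k → Finset (Fin n) :=
    fun p => univ.filter (fun v => p.val = L v ∨ p.val = m + R v) with hS
  have hmem : ∀ p v, v ∈ S p ↔ (p.val = L v ∨ p.val = m + R v) := by
    intro p v; simp [hS]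
  -- f p c ∈ S p
  have hfmem : ∀ p c, f p c ∈ S p := by
    intro p c
    rw [hmem]
    by_cases hp : p.val < m
    · left
      rw [hLf]
      simp [hip, hp]
    · right
      have hpk : p.val < 2 * m := by rw [← hm]; exact p.isLt
      have hRf : R (f p c) = p.val - m := by
        rw [hR]
        simp only
        rw [hLf, hCf]
        simp only [hip, if_neg hp]
        rw [addmod]
        have hcb : c.val < b := c.isLt
        have : p.val - m + (m - c.val) + c.val = (p.val - m) + m := by omega
        rw [this, Nat.add_mod_right, Nat.mod_eq_of_lt (by omega)]
      rw [hRf]; omega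
  -- every element of S p is f p (C v)
  have hfrep : ∀ p, ∀ v ∈ S p, f p ⟨C v, hClt v⟩ = v := by
    intro p v hv
    rw [hmem] at hv
    apply hveq
    · rw [hLf]
      simp only [hip]
      by_cases hp : p.val < m
      · rw [if_pos hp]
        rcases hv with h | h
        · exact h
        · exfalso; omega
      · rw [if_neg hp]
        rcases hv with h | h
        · exfalso; have := hLlt v; omega
        · have hpm : p.val - m = R v := by omega
          rw [hpm, hR]
          simp only
          rw [addmod]
          have : L v + C v + (m - C v) = L v + m := by
            have := hClt v; omega
          rw [this, Nat.add_mod_right, Nat.mod_eq_of_lt (hLlt v)]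
    · rw [hCf]
  have hfinj : ∀ p, Function.Injective (f p) := by
    intro p c c' h
    have h1 := hCf p c
    have h2 := hCf p c'
    rw [h] at h1
    exact Fin.ext (by omega)
  have hSeq : ∀ p, S p = (univ : Finset (Fin b)).image (f p) := by
    intro p
    ext v
    simp only [mem_image, mem_univ, true_and]
    constructor
    · intro hv
      exact ⟨⟨C v, hClt v⟩, hfrep p v hv⟩
    · rintro ⟨c, rfl⟩
      exact hfmem p c
  refine ⟨S, ?_, ?_, ?_, ?_⟩
  · intro p
    rw [hbval, hSeq p, card_image_of_injective _ (hfinj p), card_univ, Fintype.card_fin]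
  · -- pairwise intersections
    intro p q hpq
    apply Finset.card_le_one.mpr
    intro v hv w hw
    simp only [mem_inter] at hv hw
    obtain ⟨hvp, hvq⟩ := hv
    obtain ⟨hwp, hwq⟩ := hw
    rw [hmem] at hvp hvq hwp hwq
    have hpqval : p.val ≠ q.val := fun h => hpq (Fin.ext h)
    have hLv := hLlt v; have hLw := hLlt w
    have hRv := hRlt v; have hRw := hRlt w
    have hdet : ∀ x : Fin n, (p.val = L x ∨ p.val = m + R x) →
        (q.val = L x ∨ q.val = m + R x) →
        (p.val = L x ∧ q.val = m + R x) ∨ (q.val = L x ∧ p.val = m + R x) := by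
      intro x h1 h2
      rcases h1 with h1 | h1 <;> rcases h2 with h2 | h2 <;> omega
    have hv' := hdet v hvp hvq
    have hw' := hdet w hwp hwq
    have hLvw : L v = L w ∧ R v = R w := by
      rcases hv' with ⟨h1, h2⟩ | ⟨h1, h2⟩ <;> rcases hw' with ⟨h3, h4⟩ | ⟨h3, h4⟩ <;>
        constructor <;> omega
    have hCvw : C v = C w := by
      apply modcancel (L v) _ _ (lt_of_lt_of_le (hClt v) hbm) (lt_of_lt_of_le (hClt w) hbm)
      have h1 : (L v + C v) % m = (L w + C w) % m := hLvw.2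
      rw [← hLvw.1] at h1
      exact h1
    exact hveq v w hLvw.1 hCvw
  · -- every agent in exactly two
    intro v
    have h1 : m + R v < k := by have := hRlt v; omega
    have h2 : L v < k := by have := hLlt v; omega
    have : (univ.filter (fun p => v ∈ S p)) = {⟨L v, h2⟩, ⟨m + R v, h1⟩} := by
      ext p
      simp only [mem_filter, mem_univ, true_and, mem_insert, mem_singleton]
      rw [hmem]
      constructor
      · rintro (h | h)
        · left; exact Fin.ext h
        · right; exact Fin.ext h
      · rintro (rfl | rfl)
        · left; rfl
        · right; rfl
    rw [this]
    rw [card_insert_of_notMem, card_singleton]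
    simp only [mem_singleton, Fin.mk.injEq]
    intro h
    have := hLlt v
    omega
  · -- partition property
    intro U
    refine ⟨fun t => U.filter (fun v => C v = t.val), ?_, ?_, ?_⟩
    · intro t t' htt'
      apply Finset.disjoint_left.mpr
      intro v hv hv'
      simp only [mem_filter] at hv hv'
      exact htt' (Fin.ext (by omega))
    · ext v
      simp only [mem_biUnion, mem_univ, true_and, mem_filter]
      constructor
      · rintro ⟨t, hv, _⟩; exact hv
      · intro hv
        exact ⟨⟨C v, by rw [hbval]; exact hClt v⟩, hv, rfl⟩
    · intro t u hu v hv huv p hup hvp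
      simp only [mem_filter] at hu hv
      have hCuv : C u = C v := by omega
      have hLuv : L u ≠ L v := by
        intro h
        exact huv (hveq u v h hCuv)
      rw [hmem] at hup hvp
      have hLu := hLlt u; have hLv := hLlt v
      rcases hup with h1 | h1 <;> rcases hvp with h2 | h2
      · omega
      · omega
      · omega
      · have hRuv : R u = R v := by omega
        apply hLuv
        apply modcancel (C u) _ _ hLu hLv
        have h3 : (L u + C u) % m = (L v + C v) % m := hRuv
        rw [← hCuv] at h3
        rw [Nat.add_comm (C u) (L u), Nat.add_comm (C u) (L v)]
        exact h3
end

section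
/- Let n, k ∈ ℕ with k < n be such that b := 2n/k is a natural number, k is even, and b ≤ k/2. Then there exists an (n,k)-selection mechanism that is impartial and (1/b)-optimal. -/
open Finset

namespace Stmt7Aux

variable {n : ℕ}

/-- Column class of an agent (residue mod `m`). -/
def colC (m : ℕ) (a : Fin n) : ℕ := a.val % m

/-- Transversal class of an agent. -/
def tcC (m : ℕ) (a : Fin n) : ℕ := (a.val % m + a.val / m) % m

/-- External part of the score: votes from outside the agent's column class. -/
noncomputable def sE (m : ℕ) (A : Matrix (Fin n) (Fin n) ℝ) (a : Fin n) : ℝ :=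
  ∑ v ∈ Finset.univ.filter (fun v => colC m v ≠ colC m a), A v a

/-- Internal part: votes from the agent's own column class (other than itself). -/
noncomputable def sI (m : ℕ) (A : Matrix (Fin n) (Fin n) ℝ) (a : Fin n) : ℝ :=
  ∑ v ∈ Finset.univ.filter (fun v => colC m v = colC m a ∧ v ≠ a), A v a

/-- `a` is the winner of its column class w.r.t. `sE` (ties to lower index). -/
def WA (m : ℕ) (A : Matrix (Fin n) (Fin n) ℝ) (a : Fin n) : Prop :=
  ∀ x : Fin n, colC m x = colC m a → x ≠ a →
    (sE m A x < sE m A a ∨ (sE m A x = sE m A a ∧ a.val < x.val))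

/-- `a` is the winner of its transversal class w.r.t. `sI` (ties to lower index). -/
def WB (m : ℕ) (A : Matrix (Fin n) (Fin n) ℝ) (a : Fin n) : Prop :=
  ∀ x : Fin n, tcC m x = tcC m a → x ≠ a →
    (sI m A x < sI m A a ∨ (sI m A x = sI m A a ∧ a.val < x.val))

open Classical in
/-- The mechanism: select all column winners and all transversal winners. -/
noncomputable def mechF (m : ℕ) (A : Matrix (Fin n) (Fin n) ℝ) : Finset (Fin n) :=
  Finset.univ.filter (fun a => WA m A a ∨ WB m A a)

lemma mem_mechF {m : ℕ} {A : Matrix (Fin n) (Fin n) ℝ} {a : Fin n} :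
    a ∈ mechF m A ↔ (WA m A a ∨ WB m A a) := by
  classical
  simp [mechF]

lemma sE_nonneg {m : ℕ} {A : Matrix (Fin n) (Fin n) ℝ} (hA : ∀ i j, 0 ≤ A i j) (a : Fin n) :
    0 ≤ sE m A a :=
  Finset.sum_nonneg fun v _ => hA v a

lemma sI_nonneg {m : ℕ} {A : Matrix (Fin n) (Fin n) ℝ} (hA : ∀ i j, 0 ≤ A i j) (a : Fin n) :
    0 ≤ sI m A a :=
  Finset.sum_nonneg fun v _ => hA v a

lemma val_div_lt {m b : ℕ} (hn' : n = m * b) (hm0 : 0 < m) (a : Fin n) : a.val / m < b := by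
  have h1 : a.val < m * b := hn' ▸ a.isLt
  exact Nat.div_lt_iff_lt_mul hm0 |>.mpr (by rw [mul_comm]; exact h1)

lemma eq_of_col_div {m : ℕ} (a x : Fin n) (h1 : colC m a = colC m x)
    (h2 : a.val / m = x.val / m) : a = x := by
  unfold colC at h1
  apply Fin.ext
  calc a.val = m * (a.val / m) + a.val % m := (Nat.div_add_mod _ _).symm
    _ = m * (x.val / m) + x.val % m := by rw [h1, h2]
    _ = x.val := Nat.div_add_mod _ _

lemma mod_add_left_cancel {m c r r' : ℕ} (hr : r < m) (hr' : r' < m)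
    (h : (c + r) % m = (c + r') % m) : r = r' := by
  have h' : Nat.ModEq m (c + r) (c + r') := h
  have h2 : Nat.ModEq m r r' := Nat.ModEq.add_left_cancel (Nat.ModEq.refl c) h'
  have h3 : r % m = r' % m := h2
  rwa [Nat.mod_eq_of_lt hr, Nat.mod_eq_of_lt hr'] at h3

lemma mod_add_right_cancel {m c c' r : ℕ} (hc : c < m) (hc' : c' < m)
    (h : (c + r) % m = (c' + r) % m) : c = c' := by
  have h' : (r + c) % m = (r + c') % m := by
    rw [Nat.add_comm r c, Nat.add_comm r c']; exact h
  exact mod_add_left_cancel hc hc' h'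

lemma eq_of_col_tc {m b : ℕ} (hn' : n = m * b) (hm0 : 0 < m) (hbm : b ≤ m) (a x : Fin n)
    (hc : colC m a = colC m x) (ht : tcC m a = tcC m x) : a = x := by
  apply eq_of_col_div a x hc
  unfold tcC at ht
  unfold colC at hc
  rw [hc] at ht
  exact mod_add_left_cancel (lt_of_lt_of_le (val_div_lt hn' hm0 a) hbm)
    (lt_of_lt_of_le (val_div_lt hn' hm0 x) hbm) ht

lemma card_colFiber {m b : ℕ} (hn' : n = m * b) (hm0 : 0 < m) (q : ℕ) :
    ((Finset.univ : Finset (Fin n)).filter (fun a => colC m a = q)).card ≤ b := by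
  classical
  have h := Finset.card_le_card_of_injOn (fun a : Fin n => a.val / m)
    (s := (Finset.univ : Finset (Fin n)).filter (fun a => colC m a = q))
    (t := Finset.range b)
    (fun a _ => Finset.mem_range.mpr (val_div_lt hn' hm0 a))
    (by
      intro a ha x hx hdiv
      simp only [Finset.coe_filter, Set.mem_setOf_eq] at ha hx
      exact eq_of_col_div a x (ha.2.trans hx.2.symm) hdiv)
  simpa using h

lemma card_tcFiber {m b : ℕ} (hn' : n = m * b) (hm0 : 0 < m) (l : ℕ) :
    ((Finset.univ : Finset (Fin n)).filter (fun a => tcC m a = l)).card ≤ b := by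
  classical
  have h := Finset.card_le_card_of_injOn (fun a : Fin n => a.val / m)
    (s := (Finset.univ : Finset (Fin n)).filter (fun a => tcC m a = l))
    (t := Finset.range b)
    (fun a _ => Finset.mem_range.mpr (val_div_lt hn' hm0 a))
    (by
      intro a ha x hx hdiv
      simp only [Finset.coe_filter, Set.mem_setOf_eq] at ha hx
      have ht : tcC m a = tcC m x := ha.2.trans hx.2.symm
      unfold tcC at ht
      have hdiv' : a.val / m = x.val / m := hdiv
      rw [hdiv'] at ht
      have hcol : a.val % m = x.val % m :=
        mod_add_right_cancel (Nat.mod_lt _ hm0) (Nat.mod_lt _ hm0) ht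
      exact eq_of_col_div a x hcol hdiv')
  simpa using h

lemma WA_unique {m : ℕ} {A : Matrix (Fin n) (Fin n) ℝ} {a a' : Fin n}
    (ha : WA m A a) (ha' : WA m A a') (hc : colC m a = colC m a') : a = a' := by
  by_contra hne
  have h1 := ha a' hc.symm (Ne.symm hne)
  have h2 := ha' a hc hne
  rcases h1 with h1 | ⟨h1e, h1l⟩ <;> rcases h2 with h2 | ⟨h2e, h2l⟩
  · linarith
  · rw [h2e] at h1; linarith
  · rw [h1e] at h2; linarith
  · omega

lemma WB_unique {m : ℕ} {A : Matrix (Fin n) (Fin n) ℝ} {a a' : Fin n}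
    (ha : WB m A a) (ha' : WB m A a') (hc : tcC m a = tcC m a') : a = a' := by
  by_contra hne
  have h1 := ha a' hc.symm (Ne.symm hne)
  have h2 := ha' a hc hne
  rcases h1 with h1 | ⟨h1e, h1l⟩ <;> rcases h2 with h2 | ⟨h2e, h2l⟩
  · linarith
  · rw [h2e] at h1; linarith
  · rw [h1e] at h2; linarith
  · omega

lemma card_mechF {m : ℕ} (hm0 : 0 < m) (A : Matrix (Fin n) (Fin n) ℝ) :
    (mechF m A).card ≤ m + m := by
  classical
  have hsub : mechF m A ⊆
      (Finset.univ.filter (fun a => WA m A a)) ∪ (Finset.univ.filter (fun a => WB m A a)) := by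
    intro a ha
    rw [mem_mechF] at ha
    rcases ha with h | h
    · exact Finset.mem_union_left _ (Finset.mem_filter.mpr ⟨Finset.mem_univ _, h⟩)
    · exact Finset.mem_union_right _ (Finset.mem_filter.mpr ⟨Finset.mem_univ _, h⟩)
  have cA : (Finset.univ.filter (fun a : Fin n => WA m A a)).card ≤ m := by
    have h := Finset.card_le_card_of_injOn (fun a : Fin n => colC m a)
      (s := Finset.univ.filter (fun a : Fin n => WA m A a))
      (t := Finset.range m)
      (fun a _ => Finset.mem_range.mpr (Nat.mod_lt _ hm0))
      (by
        intro a ha x hx h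
        simp only [Finset.coe_filter, Set.mem_setOf_eq] at ha hx
        exact WA_unique ha.2 hx.2 h)
    simpa using h
  have cB : (Finset.univ.filter (fun a : Fin n => WB m A a)).card ≤ m := by
    have h := Finset.card_le_card_of_injOn (fun a : Fin n => tcC m a)
      (s := Finset.univ.filter (fun a : Fin n => WB m A a))
      (t := Finset.range m)
      (fun a _ => Finset.mem_range.mpr (Nat.mod_lt _ hm0))
      (by
        intro a ha x hx h
        simp only [Finset.coe_filter, Set.mem_setOf_eq] at ha hx
        exact WB_unique ha.2 hx.2 h)
    simpa using h
  calc (mechF m A).card ≤ _ := Finset.card_le_card hsub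
    _ ≤ _ + _ := Finset.card_union_le _ _
    _ ≤ m + m := add_le_add cA cB

lemma sE_row_eq {m : ℕ} {A A' : Matrix (Fin n) (Fin n) ℝ} {i : Fin n}
    (h : ∀ v, v ≠ i → A v = A' v) {x : Fin n} (hx : colC m x = colC m i) :
    sE m A x = sE m A' x := by
  unfold sE
  apply Finset.sum_congr rfl
  intro v hv
  have hvx : colC m v ≠ colC m x := (Finset.mem_filter.mp hv).2
  have hvi : v ≠ i := by
    rintro rfl
    exact hvx hx.symm
  rw [h v hvi]

lemma sI_row_eq {m b : ℕ} (hn' : n = m * b) (hm0 : 0 < m) (hbm : b ≤ m)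
    {A A' : Matrix (Fin n) (Fin n) ℝ} {i : Fin n}
    (h : ∀ v, v ≠ i → A v = A' v) {x : Fin n} (hx : tcC m x = tcC m i) :
    sI m A x = sI m A' x := by
  unfold sI
  apply Finset.sum_congr rfl
  intro v hv
  have hv' := (Finset.mem_filter.mp hv).2
  have hvi : v ≠ i := by
    intro he
    have hcx : colC m x = colC m i := by rw [← he]; exact hv'.1.symm
    have hxi : x = i := eq_of_col_tc hn' hm0 hbm x i hcx hx
    exact hv'.2 (he.trans hxi.symm)
  rw [h v hvi]

lemma WA_row_iff {m : ℕ} {A A' : Matrix (Fin n) (Fin n) ℝ} {i : Fin n}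
    (h : ∀ v, v ≠ i → A v = A' v) : WA m A i ↔ WA m A' i := by
  constructor
  · intro H x h1 h2
    rw [← sE_row_eq h h1, ← sE_row_eq h rfl]
    exact H x h1 h2
  · intro H x h1 h2
    rw [sE_row_eq h h1, sE_row_eq h rfl]
    exact H x h1 h2

lemma WB_row_iff {m b : ℕ} (hn' : n = m * b) (hm0 : 0 < m) (hbm : b ≤ m)
    {A A' : Matrix (Fin n) (Fin n) ℝ} {i : Fin n}
    (h : ∀ v, v ≠ i → A v = A' v) : WB m A i ↔ WB m A' i := by
  constructor
  · intro H x h1 h2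
    rw [← sI_row_eq hn' hm0 hbm h h1, ← sI_row_eq hn' hm0 hbm h rfl]
    exact H x h1 h2
  · intro H x h1 h2
    rw [sI_row_eq hn' hm0 hbm h h1, sI_row_eq hn' hm0 hbm h rfl]
    exact H x h1 h2

lemma exists_winnerA {m : ℕ} (hm0 : 0 < m) (hmn : m ≤ n)
    (A : Matrix (Fin n) (Fin n) ℝ) {q : ℕ} (hq : q < m) :
    ∃ w : Fin n, colC m w = q ∧ WA m A w ∧ ∀ x, colC m x = q → sE m A x ≤ sE m A w := by
  classical
  set Col : Finset (Fin n) := Finset.univ.filter (fun a => colC m a = q) with hCol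
  have hne : Col.Nonempty := by
    refine ⟨⟨q, lt_of_lt_of_le hq hmn⟩, ?_⟩
    exact Finset.mem_filter.mpr ⟨Finset.mem_univ _, Nat.mod_eq_of_lt hq⟩
  obtain ⟨w0, hw0, hmax⟩ := Col.exists_max_image (sE m A) hne
  set W : Finset (Fin n) := Col.filter (fun a => sE m A a = sE m A w0) with hW
  have hWne : W.Nonempty := ⟨w0, by simp [hW, hw0]⟩
  set w := W.min' hWne with hwdef
  have hwW : w ∈ W := W.min'_mem hWne
  have hwCol : w ∈ Col := (Finset.mem_filter.mp hwW).1
  have hwE : sE m A w = sE m A w0 := (Finset.mem_filter.mp hwW).2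
  have hwq : colC m w = q := (Finset.mem_filter.mp hwCol).2
  refine ⟨w, hwq, ?_, ?_⟩
  · intro x hx hxw
    have hxq : colC m x = q := by rw [hx, hwq]
    have hxCol : x ∈ Col := Finset.mem_filter.mpr ⟨Finset.mem_univ _, hxq⟩
    have hle : sE m A x ≤ sE m A w := by
      rw [hwE]; exact hmax x hxCol
    rcases lt_or_eq_of_le hle with hlt | heq
    · exact Or.inl hlt
    · refine Or.inr ⟨heq, ?_⟩
      have hxW : x ∈ W := Finset.mem_filter.mpr ⟨hxCol, by rw [heq, hwE]⟩
      have hle2 : w ≤ x := W.min'_le x hxW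
      have : w < x := lt_of_le_of_ne hle2 (fun hh => hxw hh.symm)
      exact this
  · intro x hx
    rw [hwE]
    exact hmax x (Finset.mem_filter.mpr ⟨Finset.mem_univ _, hx⟩)

lemma exists_winnerB {m : ℕ} (hm0 : 0 < m) (hmn : m ≤ n)
    (A : Matrix (Fin n) (Fin n) ℝ) {l : ℕ} (hl : l < m) :
    ∃ w : Fin n, tcC m w = l ∧ WB m A w ∧ ∀ x, tcC m x = l → sI m A x ≤ sI m A w := by
  classical
  set Col : Finset (Fin n) := Finset.univ.filter (fun a => tcC m a = l) with hCol
  have hne : Col.Nonempty := by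
    refine ⟨⟨l, lt_of_lt_of_le hl hmn⟩, ?_⟩
    simp [hCol, tcC, Nat.mod_eq_of_lt hl, Nat.div_eq_of_lt hl]
  obtain ⟨w0, hw0, hmax⟩ := Col.exists_max_image (sI m A) hne
  set W : Finset (Fin n) := Col.filter (fun a => sI m A a = sI m A w0) with hW
  have hWne : W.Nonempty := ⟨w0, by simp [hW, hw0]⟩
  set w := W.min' hWne with hwdef
  have hwW : w ∈ W := W.min'_mem hWne
  have hwCol : w ∈ Col := (Finset.mem_filter.mp hwW).1
  have hwE : sI m A w = sI m A w0 := (Finset.mem_filter.mp hwW).2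
  have hwq : tcC m w = l := (Finset.mem_filter.mp hwCol).2
  refine ⟨w, hwq, ?_, ?_⟩
  · intro x hx hxw
    have hxq : tcC m x = l := by rw [hx, hwq]
    have hxCol : x ∈ Col := Finset.mem_filter.mpr ⟨Finset.mem_univ _, hxq⟩
    have hle : sI m A x ≤ sI m A w := by
      rw [hwE]; exact hmax x hxCol
    rcases lt_or_eq_of_le hle with hlt | heq
    · exact Or.inl hlt
    · refine Or.inr ⟨heq, ?_⟩
      have hxW : x ∈ W := Finset.mem_filter.mpr ⟨hxCol, by rw [heq, hwE]⟩
      have hle2 : w ≤ x := W.min'_le x hxW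
      have : w < x := lt_of_le_of_ne hle2 (fun hh => hxw hh.symm)
      exact this
  · intro x hx
    rw [hwE]
    exact hmax x (Finset.mem_filter.mpr ⟨Finset.mem_univ _, hx⟩)

lemma colsum_split {m : ℕ} {A : Matrix (Fin n) (Fin n) ℝ} (hdiag : ∀ i, A i i = 0) (j : Fin n) :
    ∑ v, A v j = sE m A j + sI m A j := by
  classical
  have hsplit := Finset.sum_filter_add_sum_filter_not (Finset.univ : Finset (Fin n))
    (fun v => colC m v ≠ colC m j) (fun v => A v j)
  have h2 : (Finset.univ.filter (fun v : Fin n => ¬ colC m v ≠ colC m j))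
      = Finset.univ.filter (fun v => colC m v = colC m j) := by
    apply Finset.filter_congr
    intro v _
    simp only [ne_eq, not_not]
  have h3 : Finset.univ.filter (fun v : Fin n => colC m v = colC m j)
      = insert j (Finset.univ.filter (fun v => colC m v = colC m j ∧ v ≠ j)) := by
    ext v
    simp only [Finset.mem_insert, Finset.mem_filter, Finset.mem_univ, true_and]
    constructor
    · intro hv
      by_cases hvj : v = j
      · exact Or.inl hvj
      · exact Or.inr ⟨hv, hvj⟩
    · rintro (rfl | ⟨hv, _⟩)
      · rfl
      · exact hv
  have h4 : j ∉ Finset.univ.filter (fun v : Fin n => colC m v = colC m j ∧ v ≠ j) := by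
    simp
  rw [← hsplit, h2, h3, Finset.sum_insert h4, hdiag j]
  unfold sE sI
  ring

lemma sum_part_le {m b : ℕ} (cls : Fin n → ℕ) (g : Fin n → ℝ)
    (hg0 : ∀ a, 0 ≤ g a)
    (hcls : ∀ a, cls a < m)
    (hfib : ∀ q, ((Finset.univ : Finset (Fin n)).filter (fun a => cls a = q)).card ≤ b)
    (F : Finset (Fin n)) (win : ℕ → Fin n)
    (hmem : ∀ q, q < m → win q ∈ F)
    (hwcls : ∀ q, q < m → cls (win q) = q)
    (hmax : ∀ q, q < m → ∀ x, cls x = q → g x ≤ g (win q))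
    (K : Finset (Fin n)) :
    ∑ j ∈ K, g j ≤ (b : ℝ) * ∑ a ∈ F, g a := by
  classical
  have step1 : ∑ j ∈ K, g j ≤ ∑ j ∈ K, g (win (cls j)) :=
    Finset.sum_le_sum fun j _ => hmax (cls j) (hcls j) j rfl
  have step2 : ∑ j ∈ K, g (win (cls j))
      = ∑ q ∈ Finset.range m, ∑ j ∈ K.filter (fun j => cls j = q), g (win (cls j)) :=
    (Finset.sum_fiberwise_of_maps_to (fun j _ => Finset.mem_range.mpr (hcls j)) _).symm
  have step3 : ∀ q ∈ Finset.range m,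
      ∑ j ∈ K.filter (fun j => cls j = q), g (win (cls j)) ≤ (b : ℝ) * g (win q) := by
    intro q _
    have he : ∑ j ∈ K.filter (fun j => cls j = q), g (win (cls j))
        = ∑ _j ∈ K.filter (fun j => cls j = q), g (win q) :=
      Finset.sum_congr rfl fun j hj => by rw [(Finset.mem_filter.mp hj).2]
    rw [he, Finset.sum_const, nsmul_eq_mul]
    have hcard : (K.filter (fun j => cls j = q)).card ≤ b := by
      refine le_trans (Finset.card_le_card ?_) (hfib q)
      exact Finset.filter_subset_filter _ (Finset.subset_univ K)
    apply mul_le_mul_of_nonneg_right _ (hg0 (win q))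
    exact_mod_cast hcard
  have step5 : ∑ q ∈ Finset.range m, g (win q) ≤ ∑ a ∈ F, g a := by
    have himg : ∑ a ∈ (Finset.range m).image win, g a
        = ∑ q ∈ Finset.range m, g (win q) := by
      apply Finset.sum_image
      intro q hq q' hq' h
      have h1 := hwcls q (Finset.mem_range.mp hq)
      have h2 := hwcls q' (Finset.mem_range.mp hq')
      rw [← h1, ← h2, h]
    rw [← himg]
    apply Finset.sum_le_sum_of_subset_of_nonneg
    · intro a ha
      obtain ⟨q, hq, rfl⟩ := Finset.mem_image.mp ha
      exact hmem q (Finset.mem_range.mp hq)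
    · intro a _ _
      exact hg0 a
  calc ∑ j ∈ K, g j ≤ ∑ j ∈ K, g (win (cls j)) := step1
    _ = ∑ q ∈ Finset.range m, ∑ j ∈ K.filter (fun j => cls j = q), g (win (cls j)) := step2
    _ ≤ ∑ q ∈ Finset.range m, (b : ℝ) * g (win q) := Finset.sum_le_sum step3
    _ = (b : ℝ) * ∑ q ∈ Finset.range m, g (win q) := (Finset.mul_sum _ _ _).symm
    _ ≤ (b : ℝ) * ∑ a ∈ F, g a := by
        apply mul_le_mul_of_nonneg_left step5 (by positivity)

end Stmt7Aux

/-- For `k < n` with `b := 2n/k ∈ ℕ`, `k` even, and `b ≤ k/2`, there exists an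
impartial and `(1/b)`-optimal `(n,k)`-selection mechanism. -/
theorem stmt7 (n k : ℕ) (hkn : k < n) (hdvd : k ∣ 2 * n) (hk2 : k % 2 = 0)
    (hble : 2 * n / k ≤ k / 2) :
    ∃ f : Matrix (Fin n) (Fin n) ℝ → Finset (Fin n),
      (∀ A, (f A).card ≤ k) ∧ Impartial f ∧
      AlphaOptimal k f (1 / ((2 * n / k : ℕ) : ℝ)) := by
  classical
  set m := k / 2 with hmdef
  set b := 2 * n / k with hbdef
  have hk0 : k ≠ 0 := by
    rintro rfl
    rw [zero_dvd_iff] at hdvd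
    omega
  have hm2 : 2 * m = k := by omega
  have hkb : k * b = 2 * n := Nat.mul_div_cancel' hdvd
  have hn' : n = m * b := by
    have h1 : 2 * n = 2 * (m * b) := by rw [← hkb, ← hm2]; ring
    exact Nat.eq_of_mul_eq_mul_left (show 0 < 2 by norm_num) h1
  have hm0 : 0 < m := by omega
  have hb0 : 0 < b := by
    rcases Nat.eq_zero_or_pos b with h | h
    · rw [h, mul_zero] at hn'; omega
    · exact h
  have hbm : b ≤ m := hble
  have hmn : m ≤ n := by
    calc m = m * 1 := (mul_one m).symm
      _ ≤ m * b := Nat.mul_le_mul_left m hb0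
      _ = n := hn'.symm
  have hn0 : 0 < n := by omega
  refine ⟨Stmt7Aux.mechF m, ?_, ?_, ?_⟩
  · intro A
    calc (Stmt7Aux.mechF m A).card ≤ m + m := Stmt7Aux.card_mechF hm0 A
      _ = k := by omega
  · intro A A' _ _ i h
    rw [Stmt7Aux.mem_mechF, Stmt7Aux.mem_mechF,
      Stmt7Aux.WA_row_iff h, Stmt7Aux.WB_row_iff hn' hm0 hbm h]
  · intro A hA
    have hscore0 : 0 ≤ score A (Stmt7Aux.mechF m A) := by
      apply Finset.sum_nonneg
      intro i _
      exact Finset.sum_nonneg fun j _ => hA.1 i j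
    have hopt : optScore k A ≤ (b : ℝ) * score A (Stmt7Aux.mechF m A) := by
      apply Real.sSup_le
      · rintro x ⟨K, _, rfl⟩
        -- winners
        have hwA : ∀ q : ℕ, ∃ w : Fin n, q < m →
            (Stmt7Aux.colC m w = q ∧ Stmt7Aux.WA m A w ∧
              ∀ x, Stmt7Aux.colC m x = q → Stmt7Aux.sE m A x ≤ Stmt7Aux.sE m A w) := by
          intro q
          by_cases hq : q < m
          · obtain ⟨w, hw⟩ := Stmt7Aux.exists_winnerA hm0 hmn A hq
            exact ⟨w, fun _ => hw⟩
          · exact ⟨⟨0, hn0⟩, fun h => absurd h hq⟩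
        have hwB : ∀ l : ℕ, ∃ w : Fin n, l < m →
            (Stmt7Aux.tcC m w = l ∧ Stmt7Aux.WB m A w ∧
              ∀ x, Stmt7Aux.tcC m x = l → Stmt7Aux.sI m A x ≤ Stmt7Aux.sI m A w) := by
          intro l
          by_cases hl : l < m
          · obtain ⟨w, hw⟩ := Stmt7Aux.exists_winnerB hm0 hmn A hl
            exact ⟨w, fun _ => hw⟩
          · exact ⟨⟨0, hn0⟩, fun h => absurd h hl⟩
        choose winA hwinA using hwA
        choose winB hwinB using hwB
        have hE : ∑ j ∈ K, Stmt7Aux.sE m A j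
            ≤ (b : ℝ) * ∑ a ∈ Stmt7Aux.mechF m A, Stmt7Aux.sE m A a := by
          apply Stmt7Aux.sum_part_le (Stmt7Aux.colC m) (Stmt7Aux.sE m A)
            (Stmt7Aux.sE_nonneg hA.1) (fun a => Nat.mod_lt _ hm0)
            (fun q => Stmt7Aux.card_colFiber hn' hm0 q) (Stmt7Aux.mechF m A) winA
          · intro q hq
            exact Stmt7Aux.mem_mechF.mpr (Or.inl ((hwinA q hq).2.1))
          · intro q hq
            exact (hwinA q hq).1
          · intro q hq x hx
            exact (hwinA q hq).2.2 x hx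
        have hI : ∑ j ∈ K, Stmt7Aux.sI m A j
            ≤ (b : ℝ) * ∑ a ∈ Stmt7Aux.mechF m A, Stmt7Aux.sI m A a := by
          apply Stmt7Aux.sum_part_le (Stmt7Aux.tcC m) (Stmt7Aux.sI m A)
            (Stmt7Aux.sI_nonneg hA.1) (fun a => Nat.mod_lt _ hm0)
            (fun l => Stmt7Aux.card_tcFiber hn' hm0 l) (Stmt7Aux.mechF m A) winB
          · intro l hl
            exact Stmt7Aux.mem_mechF.mpr (Or.inr ((hwinB l hl).2.1))
          · intro l hl
            exact (hwinB l hl).1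
          · intro l hl x hx
            exact (hwinB l hl).2.2 x hx
        calc score A K = ∑ j ∈ K, ∑ v, A v j := Finset.sum_comm
          _ = ∑ j ∈ K, (Stmt7Aux.sE m A j + Stmt7Aux.sI m A j) :=
              Finset.sum_congr rfl fun j _ => Stmt7Aux.colsum_split hA.2 j
          _ = (∑ j ∈ K, Stmt7Aux.sE m A j) + ∑ j ∈ K, Stmt7Aux.sI m A j :=
              Finset.sum_add_distrib
          _ ≤ ((b : ℝ) * ∑ a ∈ Stmt7Aux.mechF m A, Stmt7Aux.sE m A a)
              + (b : ℝ) * ∑ a ∈ Stmt7Aux.mechF m A, Stmt7Aux.sI m A a := add_le_add hE hI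
          _ = (b : ℝ) * ∑ a ∈ Stmt7Aux.mechF m A,
                (Stmt7Aux.sE m A a + Stmt7Aux.sI m A a) := by
              rw [Finset.sum_add_distrib]; ring
          _ = (b : ℝ) * ∑ a ∈ Stmt7Aux.mechF m A, ∑ v, A v a := by
              congr 1
              exact Finset.sum_congr rfl fun a _ => (Stmt7Aux.colsum_split hA.2 a).symm
          _ = (b : ℝ) * score A (Stmt7Aux.mechF m A) := by
              congr 1
              exact Finset.sum_comm
      · positivity
    have hbR : ((b : ℕ) : ℝ) ≠ 0 := by
      exact_mod_cast hb0.ne'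
    calc (1 / ((b : ℕ) : ℝ)) * optScore k A
        ≤ (1 / ((b : ℕ) : ℝ)) * ((b : ℝ) * score A (Stmt7Aux.mechF m A)) := by
          apply mul_le_mul_of_nonneg_left hopt
          positivity
      _ = score A (Stmt7Aux.mechF m A) := by
          field_simp
end

section
/- Let n, k ∈ ℕ with k < n be such that b := 2n/k is a natural number, k is even, and b ≤ k/2. Let S₂¹, …, S₂ᵏ ⊆ [n] be a robust balanced partition system (properties (i)–(iii): each |S₂ᵖ| = b, pairwise intersections of size at most 1, each agent in exactly two sets) with S₂¹ = {1,…,b}, and let S₁ᵖ := [n] \ S₂ᵖ. For each agent j, let l(j) < r(j) be the two indices p with j ∈ S₂ᵖ, and for a weight matrix A ∈ 𝒜_n define the modified scores σ̂_{S₁^{l(j)}}(j;A) := ∑_{i ∈ S₁^{l(j)}} A_{ij} and σ̂_{S₁^{r(j)}}(j;A) := ∑_{i ∈ S₁^{r(j)} \ S₁^{l(j)}} A_{ij}; for p ∈ [k], let iᵖ(A) be the element j ∈ S₂ᵖ maximizing the pair (σ̂_{S₁ᵖ}(j;A), j) lexicographically. Then there exists a matrix A ∈ 𝒜_n with all entries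 in {0,1} such that max_{S ⊆ [n], |S| = k} σ(S;A) = b while σ(X;A) = 1 for X := { iᵖ(A) | p ∈ [k] }. In particular, the mechanism that outputs X is exactly (1/b)-optimal and not (1/b + ε)-optimal for any ε > 0. -/
open Finset

/-- The voter set of partition `p`: the complement of the candidate set `S₂ p`. -/
def voters {n k : ℕ} (S₂ : Fin k → Finset (Fin n)) (p : Fin k) : Finset (Fin n) :=
  Finset.univ \ S₂ p

/-- The modified score `σ̂_{S₁ᵖ}(j)` of candidate `j` in partition `p ∈ {l j, r j}`:
all votes from `S₁^{l j}` in the first candidacy, and the remaining votes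
(from `S₁^{r j} \ S₁^{l j}`) in the second candidacy. -/
def mhat {n k : ℕ} (S₂ : Fin k → Finset (Fin n)) (l r : Fin n → Fin k)
    (A : Matrix (Fin n) (Fin n) ℝ) (p : Fin k) (j : Fin n) : ℝ :=
  if p = l j then ∑ i ∈ voters S₂ (l j), A i j
  else ∑ i ∈ voters S₂ (r j) \ voters S₂ (l j), A i j

/-- `ip` is the element of `S₂ p` maximizing the pair `(σ̂_{S₁ᵖ}(j), j)`
lexicographically. -/
def IsLexArgmax {n k : ℕ} (S₂ : Fin k → Finset (Fin n)) (l r : Fin n → Fin k)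
    (A : Matrix (Fin n) (Fin n) ℝ) (p : Fin k) (ip : Fin n) : Prop :=
  ip ∈ S₂ p ∧ ∀ j ∈ S₂ p,
    mhat S₂ l r A p j < mhat S₂ l r A p ip ∨
      (mhat S₂ l r A p j = mhat S₂ l r A p ip ∧ j ≤ ip)

/-- Tightness of the analysis: for a robust balanced partition system with
`S₂¹ = {1,…,b}`, there is a 0/1 weight matrix on which the best `k`-subset scores
`b` while the selected set `X = {iᵖ(A) | p ∈ [k]}` scores only `1`; in particular
the mechanism is exactly `1/b`-optimal and not `(1/b + ε)`-optimal for any `ε > 0`. -/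
theorem stmt10 (n k : ℕ) (hkn : k < n) (hdvd : k ∣ 2 * n) (hk2 : k % 2 = 0)
    (hble : 2 * n / k ≤ k / 2) (hk0 : 0 < k)
    (S₂ : Fin k → Finset (Fin n))
    (hcard : ∀ p, (S₂ p).card = 2 * n / k)
    (hlin : ∀ p q, p ≠ q → (S₂ p ∩ S₂ q).card ≤ 1)
    (htwo : ∀ v : Fin n, (Finset.univ.filter (fun p => v ∈ S₂ p)).card = 2)
    (hfirst : S₂ ⟨0, hk0⟩ =
      Finset.univ.filter (fun j : Fin n => (j : ℕ) < 2 * n / k))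
    (l r : Fin n → Fin k) (hlr : ∀ j, l j < r j)
    (hl : ∀ j, j ∈ S₂ (l j)) (hr : ∀ j, j ∈ S₂ (r j)) :
    ∃ A : Matrix (Fin n) (Fin n) ℝ, IsValidMatrix A ∧
      (∀ i j, A i j = 0 ∨ A i j = 1) ∧
      optScore k A = ((2 * n / k : ℕ) : ℝ) ∧
      ∀ isel : Fin k → Fin n, (∀ p, IsLexArgmax S₂ l r A p (isel p)) →
        score A (Finset.univ.image isel) = 1 ∧
        ∀ ε : ℝ, 0 < ε →
          score A (Finset.univ.image isel) <
            (1 / ((2 * n / k : ℕ) : ℝ) + ε) * optScore k A := by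
  set b := 2 * n / k with hb
  have hbk : b * k = 2 * n := Nat.div_mul_cancel hdvd
  have hb2 : 2 < b := by
    by_contra h
    push_neg at h
    have h1 : b * k ≤ 2 * k := Nat.mul_le_mul_right k h
    rw [hbk] at h1
    omega
  have hbn : b < n := by omega
  have hbk' : b ≤ k := by omega
  set p₀ : Fin k := ⟨0, hk0⟩ with hp₀
  set ib : Fin n := ⟨b, hbn⟩ with hib
  set A : Matrix (Fin n) (Fin n) ℝ :=
    fun i j => if (j : ℕ) < b ∧ i = ib then 1 else 0 with hA
  have hcolA : ∀ i j : Fin n,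
      A i j = if (j : ℕ) < b then (if i = ib then (1 : ℝ) else 0) else 0 := by
    intro i j
    simp only [hA]
    by_cases h1 : (j : ℕ) < b <;> by_cases h2 : i = ib <;> simp [h1, h2]
  have hscore : ∀ S : Finset (Fin n),
      score A S = ((S.filter (fun j : Fin n => (j : ℕ) < b)).card : ℝ) := by
    intro S
    rw [score, Finset.sum_comm]
    have hcong : ∀ j ∈ S, ∑ i : Fin n, A i j = if (j : ℕ) < b then (1 : ℝ) else 0 := by
      intro j _
      by_cases h : (j : ℕ) < b
      · simp only [hcolA, h, if_true]
        rw [Finset.sum_ite_eq' Finset.univ ib (fun _ => (1 : ℝ))]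
        simp
      · simp [hcolA, h]
    rw [Finset.sum_congr rfl hcong, Finset.sum_boole]
  have hfc : ∀ (m : ℕ) (h : m < n),
      ((univ : Finset (Fin n)).filter (fun j : Fin n => (j : ℕ) < m)).card = m := by
    intro m h
    have he : (univ : Finset (Fin n)).filter (fun j : Fin n => (j : ℕ) < m)
        = Finset.Iio (⟨m, h⟩ : Fin n) := by
      ext j; simp [Fin.lt_def]
    rw [he, Fin.card_Iio]
  have hS1 : S₂ p₀ = univ.filter (fun j : Fin n => (j : ℕ) < b) := hfirst
  have hub : ∀ S : Finset (Fin n), score A S ≤ (b : ℝ) := by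
    intro S
    rw [hscore]
    have hsub : S.filter (fun j : Fin n => (j : ℕ) < b) ⊆ univ.filter (fun j : Fin n => (j : ℕ) < b) :=
      Finset.filter_subset_filter _ (Finset.subset_univ S)
    have hc := Finset.card_le_card hsub
    rw [hfc b hbn] at hc
    exact_mod_cast hc
  have hc0 : ((univ : Finset (Fin n)).filter (fun j : Fin n => (j : ℕ) < k)).card = k := hfc k hkn
  have hs0 : score A ((univ : Finset (Fin n)).filter (fun j : Fin n => (j : ℕ) < k)) = (b : ℝ) := by
    rw [hscore]
    have he : ((univ : Finset (Fin n)).filter (fun j : Fin n => (j : ℕ) < k)).filter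
        (fun j : Fin n => (j : ℕ) < b) = univ.filter (fun j : Fin n => (j : ℕ) < b) := by
      ext j
      simp only [Finset.mem_filter, Finset.mem_univ, true_and]
      constructor
      · rintro ⟨_, h⟩; exact h
      · intro h; exact ⟨lt_of_lt_of_le h hbk', h⟩
    rw [he, hfc b hbn]
  have hmemset : (b : ℝ) ∈ {x : ℝ | ∃ S : Finset (Fin n), S.card = k ∧ score A S = x} :=
    ⟨(univ : Finset (Fin n)).filter (fun j : Fin n => (j : ℕ) < k), hc0, hs0⟩
  have hopt : optScore k A = (b : ℝ) := by
    apply le_antisymm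
    · apply csSup_le ⟨(b : ℝ), hmemset⟩
      rintro x ⟨S, -, rfl⟩
      exact hub S
    · apply le_csSup
      · exact ⟨(b : ℝ), by rintro x ⟨S, -, rfl⟩; exact hub S⟩
      · exact hmemset
  have hmemS : ∀ (j : Fin n) (p : Fin k), j ∈ S₂ p → p = l j ∨ p = r j := by
    intro j p hp
    by_contra h
    push_neg at h
    obtain ⟨h1, h2⟩ := h
    have hsub : ({p, l j, r j} : Finset (Fin k)) ⊆ univ.filter (fun q => j ∈ S₂ q) := by
      intro q hq
      simp only [Finset.mem_insert, Finset.mem_singleton] at hq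
      rcases hq with rfl | rfl | rfl <;> simp [hp, hl j, hr j]
    have hc3 : ({p, l j, r j} : Finset (Fin k)).card = 3 := by
      rw [Finset.card_insert_of_notMem (by simp [h1, h2]),
        Finset.card_insert_of_notMem (by simp [(hlr j).ne]), Finset.card_singleton]
    have hle := Finset.card_le_card hsub
    rw [hc3, htwo j] at hle
    omega
  have hlj : ∀ j : Fin n, (j : ℕ) < b → l j = p₀ := by
    intro j hj
    have hjm : j ∈ S₂ p₀ := by rw [hS1]; simp [hj]
    rcases hmemS j p₀ hjm with h | h
    · exact h.symm
    · exfalso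
      have hlt := hlr j
      rw [← h] at hlt
      exact absurd (Fin.lt_def.mp hlt) (Nat.not_lt_zero _)
  have hibv : ib ∈ voters S₂ p₀ := by
    simp only [voters, hS1, Finset.mem_sdiff, Finset.mem_univ, true_and,
      Finset.mem_filter, hib]
    simp
  have hmz : ∀ p : Fin k, p ≠ p₀ → ∀ j ∈ S₂ p, mhat S₂ l r A p j = 0 := by
    intro p hp j hj
    by_cases hjb : (j : ℕ) < b
    · have hlj' := hlj j hjb
      have hplj : p ≠ l j := by rw [hlj']; exact hp
      rw [mhat, if_neg hplj]
      apply Finset.sum_eq_zero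
      intro i hi
      rw [Finset.mem_sdiff] at hi
      have hiib : i ≠ ib := by
        rintro rfl
        exact hi.2 (hlj' ▸ hibv)
      simp [hA, hiib]
    · rw [mhat]
      split_ifs <;> exact Finset.sum_eq_zero fun i _ => by simp [hA, hjb]
  have hm1 : ∀ j ∈ S₂ p₀, mhat S₂ l r A p₀ j = 1 := by
    intro j hj
    have hjb : (j : ℕ) < b := by
      rw [hS1] at hj
      simpa using hj
    rw [mhat, if_pos (hlj j hjb).symm, hlj j hjb]
    have hcong : ∀ i ∈ voters S₂ p₀, A i j = if i = ib then (1 : ℝ) else 0 :=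
      fun i _ => by simp [hcolA i j, hjb]
    rw [Finset.sum_congr rfl hcong,
      Finset.sum_ite_eq' (voters S₂ p₀) ib (fun _ => (1 : ℝ)), if_pos hibv]
  refine ⟨A, ⟨?_, ?_⟩, ?_, hopt, ?_⟩
  · intro i j
    simp only [hA]
    split_ifs <;> norm_num
  · intro i
    simp only [hA]
    rw [if_neg]
    rintro ⟨h1, rfl⟩
    exact absurd h1 (lt_irrefl b)
  · intro i j
    simp only [hA]
    split_ifs
    · exact Or.inr rfl
    · exact Or.inl rfl
  · intro isel hsel
    have hselbig : ∀ p : Fin k, p ≠ p₀ → b ≤ (isel p : ℕ) := by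
      intro p hp
      obtain ⟨hmem', hmax⟩ := hsel p
      have hne : (S₂ p \ S₂ p₀).Nonempty := by
        rw [Finset.sdiff_nonempty]
        intro hsub
        have heq : S₂ p ∩ S₂ p₀ = S₂ p := Finset.inter_eq_left.mpr hsub
        have h1 := hlin p p₀ hp
        rw [heq, hcard p] at h1
        omega
      obtain ⟨j, hj⟩ := hne
      rw [Finset.mem_sdiff] at hj
      have hjb : ¬ (j : ℕ) < b := by
        intro h
        exact hj.2 (by rw [hS1]; simp [h])
      rcases hmax j hj.1 with h | h
      · rw [hmz p hp j hj.1, hmz p hp _ hmem'] at h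
        exact absurd h (lt_irrefl 0)
      · have hle : (j : ℕ) ≤ (isel p : ℕ) := h.2
        omega
    have hsmall : (isel p₀ : ℕ) < b := by
      have hm := (hsel p₀).1
      rw [hS1] at hm
      simpa using hm
    have hXf : (univ.image isel).filter (fun j : Fin n => (j : ℕ) < b) = {isel p₀} := by
      ext x
      simp only [Finset.mem_filter, Finset.mem_image, Finset.mem_univ, true_and,
        Finset.mem_singleton]
      constructor
      · rintro ⟨⟨p, rfl⟩, hx⟩
        by_cases hp : p = p₀
        · rw [hp]
        · exact absurd hx (by have := hselbig p hp; omega)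
      · rintro rfl
        exact ⟨⟨p₀, rfl⟩, hsmall⟩
    have hX1 : score A (univ.image isel) = 1 := by
      rw [hscore, hXf, Finset.card_singleton, Nat.cast_one]
    refine ⟨hX1, ?_⟩
    intro ε hε
    rw [hX1, hopt]
    have hbpos : (0 : ℝ) < (b : ℕ) := by exact_mod_cast (by omega : 0 < b)
    have hfe : (1 / ((b : ℕ) : ℝ) + ε) * ((b : ℕ) : ℝ) = 1 + ε * ((b : ℕ) : ℝ) := by
      field_simp
    rw [hfe]
    nlinarith [mul_pos hε hbpos]
end

section
/- Let n, k ∈ ℕ and let S₂¹, …, S₂ᵏ ⊆ [n] satisfy: |S₂ᵖ ∩ S₂^q| ≤ 1 for all p ≠ q, and every agent belongs to exactly two of the sets (and each S₂ᵖ is nonempty). Let S₁ᵖ := [n] \ S₂ᵖ; for each agent j let l(j) < r(j) be the two indices p with j ∈ S₂ᵖ; for A ∈ 𝒜_n define the modified scores σ̂_{S₁^{l(j)}}(j) := ∑_{i ∈ S₁^{l(j)}} A_{ij} and σ̂_{S₁^{r(j)}}(j) := ∑_{i ∈ S₁^{r(j)} \ S₁^{l(j)}} A_{ij}; and for p ∈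 [k] let iᵖ be the element j ∈ S₂ᵖ maximizing (σ̂_{S₁ᵖ}(j), j) lexicographically. Then for every agent j ∈ [n]: σ̂_{S₁^{l(j)}}(i^{l(j)}) + σ̂_{S₁^{r(j)}}(i^{r(j)}) ≥ σ(j;A), where σ(j;A) = ∑_{i∈[n]} A_{ij}. -/
open Finset

/-- The modified scores of the agents selected in the two partitions where `j` is
a candidate make up for the full score of `j`. -/
theorem stmt12 (n k : ℕ) (S₂ : Fin k → Finset (Fin n))
    (hlin : ∀ p q, p ≠ q → (S₂ p ∩ S₂ q).card ≤ 1)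
    (htwo : ∀ v : Fin n, (Finset.univ.filter (fun p => v ∈ S₂ p)).card = 2)
    (hne : ∀ p, (S₂ p).Nonempty)
    (l r : Fin n → Fin k) (hlr : ∀ j, l j < r j)
    (hl : ∀ j, j ∈ S₂ (l j)) (hr : ∀ j, j ∈ S₂ (r j))
    (A : Matrix (Fin n) (Fin n) ℝ) (hA : IsValidMatrix A)
    (isel : Fin k → Fin n) (hsel : ∀ p, IsLexArgmax S₂ l r A p (isel p)) :
    ∀ j : Fin n,
      mhat S₂ l r A (l j) (isel (l j)) + mhat S₂ l r A (r j) (isel (r j)) ≥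
        ∑ i : Fin n, A i j := by
  intro j
  obtain ⟨hApos, hAdiag⟩ := hA
  have hpq : l j ≠ r j := (hlr j).ne
  have h1 : mhat S₂ l r A (l j) j ≤ mhat S₂ l r A (l j) (isel (l j)) := by
    rcases (hsel (l j)).2 j (hl j) with h | h
    · exact h.le
    · exact h.1.le
  have h2 : mhat S₂ l r A (r j) j ≤ mhat S₂ l r A (r j) (isel (r j)) := by
    rcases (hsel (r j)).2 j (hr j) with h | h
    · exact h.le
    · exact h.1.le
  have hj : j ∈ S₂ (l j) ∩ S₂ (r j) := Finset.mem_inter.mpr ⟨hl j, hr j⟩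
  have hinter : S₂ (l j) ∩ S₂ (r j) = {j} :=
    Finset.eq_singleton_iff_unique_mem.mpr
      ⟨hj, fun x hx => Finset.card_le_one.mp (hlin _ _ hpq) x hx j hj⟩
  have hml : mhat S₂ l r A (l j) j = ∑ i ∈ voters S₂ (l j), A i j := by
    simp [mhat]
  have hmr : mhat S₂ l r A (r j) j
      = ∑ i ∈ voters S₂ (r j) \ voters S₂ (l j), A i j := by
    rw [mhat, if_neg hpq.symm]
  have hdisj : Disjoint (voters S₂ (l j)) (voters S₂ (r j) \ voters S₂ (l j)) :=
    Finset.disjoint_sdiff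
  have hunion : voters S₂ (l j) ∪ (voters S₂ (r j) \ voters S₂ (l j))
      = Finset.univ \ {j} := by
    rw [Finset.union_sdiff_self_eq_union, ← hinter]
    unfold voters
    ext x
    simp only [Finset.mem_union, Finset.mem_sdiff, Finset.mem_univ, true_and,
      Finset.mem_inter]
    tauto
  have hsum : ∑ i ∈ voters S₂ (l j), A i j
      + ∑ i ∈ voters S₂ (r j) \ voters S₂ (l j), A i j = ∑ i : Fin n, A i j := by
    rw [← Finset.sum_union hdisj, hunion,
      Finset.sum_sdiff_eq_sub (Finset.subset_univ _)]
    simp [hAdiag]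
  linarith
end

section
/- Let n, k ∈ ℕ and let S₂¹, …, S₂ᵏ ⊆ [n] satisfy: |S₂ᵖ ∩ S₂^q| ≤ 1 for all p ≠ q, and every agent belongs to exactly two of the sets (and each S₂ᵖ is nonempty). Let S₁ᵖ := [n] \ S₂ᵖ; for each agent j let l(j) < r(j) be the two indices p with j ∈ S₂ᵖ; for A ∈ 𝒜_n define the modified scores σ̂_{S₁^{l(j)}}(j) := ∑_{i ∈ S₁^{l(j)}} A_{ij} and σ̂_{S₁^{r(j)}}(j) := ∑_{i ∈ S₁^{r(j)} \ S₁^{l(j)}} A_{ij}; and for p ∈ [k] let iᵖ be the element j ∈ S₂ᵖ maximizing (σ̂_{S₁ᵖ}(j), j) lexicographically. Then for X := { iᵖ | p ∈ [k] } (a set, duplicates merged) it holds that σ(X;A) ≥ ∑_{p ∈ [k]} σ̂_{S₁ᵖ}(iᵖ), where σ(X;A) = ∑_{i∈[n], j∈X} A_{ij}. -/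
open Finset

/-!
Each modified score of `j` is a sum of entries of column `j`, and the two candidacies of `j`
sum over the disjoint voter sets `S₁^{l j}` and `S₁^{r j} \ S₁^{l j}`. Since `j` is a candidate
only in `S₂^{l j}` and `S₂^{r j}`, the partitions selecting `j` contribute at most the whole
column sum `∑ i, A i j`, which is what `j` contributes to `σ(X; A)`.
-/

section ModifiedScore

variable {n k : ℕ} (S₂ : Fin k → Finset (Fin n)) (l r : Fin n → Fin k)
  {A : Matrix (Fin n) (Fin n) ℝ}

lemma mhat_nonneg (hA : ∀ i j, 0 ≤ A i j) (p : Fin k) (j : Fin n) :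
    0 ≤ mhat S₂ l r A p j := by
  unfold mhat
  split <;> exact sum_nonneg fun i _ => hA i j

lemma mhat_left_add_mhat_right_le (hA : ∀ i j, 0 ≤ A i j) {j : Fin n} (hj : l j ≠ r j) :
    mhat S₂ l r A (l j) j + mhat S₂ l r A (r j) j ≤ ∑ i, A i j := by
  rw [mhat, if_pos rfl, mhat, if_neg hj.symm, ← sum_union disjoint_sdiff]
  exact sum_le_sum_of_subset_of_nonneg (subset_univ _) fun i _ _ => hA i j

lemma sum_mhat_le_of_subset_pair (hA : ∀ i j, 0 ≤ A i j) {j : Fin n} (hj : l j ≠ r j)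
    {s : Finset (Fin k)} (hs : s ⊆ {l j, r j}) :
    ∑ p ∈ s, mhat S₂ l r A p j ≤ ∑ i, A i j :=
  calc ∑ p ∈ s, mhat S₂ l r A p j
      ≤ ∑ p ∈ {l j, r j}, mhat S₂ l r A p j :=
        sum_le_sum_of_subset_of_nonneg hs fun p _ _ => mhat_nonneg S₂ l r hA p j
    _ = mhat S₂ l r A (l j) j + mhat S₂ l r A (r j) j := sum_pair hj
    _ ≤ ∑ i, A i j := mhat_left_add_mhat_right_le S₂ l r hA hj

end ModifiedScore

lemma mem_pair_of_mem_candidates {n k : ℕ} {S₂ : Fin k → Finset (Fin n)} {l r : Fin n → Fin k}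
    {j : Fin n} (htwo : (univ.filter fun p => j ∈ S₂ p).card = 2) (hj : l j ≠ r j)
    (hl : j ∈ S₂ (l j)) (hr : j ∈ S₂ (r j)) {p : Fin k} (hp : j ∈ S₂ p) :
    p ∈ ({l j, r j} : Finset (Fin k)) := by
  have hpair : ({l j, r j} : Finset (Fin k)) = univ.filter fun p => j ∈ S₂ p := by
    refine eq_of_subset_of_card_le ?_ (by rw [htwo, card_pair hj])
    simp [insert_subset_iff, hl, hr]
  simp [hpair, hp]

theorem stmt13_general (n k : ℕ) (S₂ : Fin k → Finset (Fin n))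
    (htwo : ∀ v : Fin n, (Finset.univ.filter (fun p => v ∈ S₂ p)).card = 2)
    (l r : Fin n → Fin k) (hlr : ∀ j, l j < r j)
    (hl : ∀ j, j ∈ S₂ (l j)) (hr : ∀ j, j ∈ S₂ (r j))
    (A : Matrix (Fin n) (Fin n) ℝ) (hA : IsValidMatrix A)
    (isel : Fin k → Fin n) (hsel : ∀ p, IsLexArgmax S₂ l r A p (isel p)) :
    score A (Finset.univ.image isel) ≥ ∑ p : Fin k, mhat S₂ l r A p (isel p) := by
  have hfiber (j : Fin n) : ∑ p ∈ univ with isel p = j, mhat S₂ l r A p (isel p)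
      ≤ ∑ i, A i j := by
    rw [sum_congr rfl fun p hp => by rw [(mem_filter.1 hp).2]]
    refine sum_mhat_le_of_subset_pair S₂ l r hA.1 (hlr j).ne fun p hp => ?_
    obtain ⟨-, rfl⟩ := mem_filter.1 hp
    exact mem_pair_of_mem_candidates (htwo _) (hlr _).ne (hl _) (hr _) (hsel p).1
  rw [ge_iff_le, ← sum_fiberwise_of_maps_to fun p _ => mem_image_of_mem isel (mem_univ p),
    score]
  exact (sum_le_sum fun j _ => hfiber j).trans_eq sum_comm

/-- The true score of the selected set `X = {iᵖ | p ∈ [k]}` is at least the sum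
over the partitions of the modified scores of the selected agents. -/
theorem stmt13 (n k : ℕ) (S₂ : Fin k → Finset (Fin n))
    (hlin : ∀ p q, p ≠ q → (S₂ p ∩ S₂ q).card ≤ 1)
    (htwo : ∀ v : Fin n, (Finset.univ.filter (fun p => v ∈ S₂ p)).card = 2)
    (hne : ∀ p, (S₂ p).Nonempty)
    (l r : Fin n → Fin k) (hlr : ∀ j, l j < r j)
    (hl : ∀ j, j ∈ S₂ (l j)) (hr : ∀ j, j ∈ S₂ (r j))
    (A : Matrix (Fin n) (Fin n) ℝ) (hA : IsValidMatrix A)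
    (isel : Fin k → Fin n) (hsel : ∀ p, IsLexArgmax S₂ l r A p (isel p)) :
    score A (Finset.univ.image isel) ≥ ∑ p : Fin k, mhat S₂ l r A p (isel p) :=
  stmt13_general n k S₂ htwo l r hlr hl hr A hA isel hsel
end

section
/- Let n, m, k ∈ ℕ with k < n and m·k ≤ n be such that b := 2n/k is a natural number, k is even, and b ≤ k/2. Then there exists an (n,m,k)-assignment mechanism that is impartial and (1/(2b))-optimal. -/
open Finset

/-- A feasible assignment: `m` pairwise disjoint sets of agents, each of
cardinality at most `k`. -/
def FeasibleAssignment {n : ℕ} (m k : ℕ) (X : Fin m → Finset (Fin n)) : Prop :=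
  (∀ ℓ, (X ℓ).card ≤ k) ∧ ∀ ℓ ℓ', ℓ ≠ ℓ' → Disjoint (X ℓ) (X ℓ')

/-- Total score of an assignment: the sum over the jobs of the score of the set
assigned to each job. -/
def totalScore {n m : ℕ} (A : Fin m → Matrix (Fin n) (Fin n) ℝ)
    (X : Fin m → Finset (Fin n)) : ℝ :=
  ∑ ℓ, score (A ℓ) (X ℓ)

/-- The maximum total score over all feasible assignments with capacity `k`. -/
noncomputable def optAssign {n : ℕ} (m k : ℕ)
    (A : Fin m → Matrix (Fin n) (Fin n) ℝ) : ℝ :=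
  sSup {x : ℝ | ∃ X : Fin m → Finset (Fin n),
    FeasibleAssignment m k X ∧ totalScore A X = x}

/-- Impartiality of an `(n,m,k)`-assignment mechanism. -/
def ImpartialAssign {n m : ℕ}
    (f : (Fin m → Matrix (Fin n) (Fin n) ℝ) → (Fin m → Finset (Fin n))) : Prop :=
  ∀ A A' : Fin m → Matrix (Fin n) (Fin n) ℝ,
    (∀ ℓ, IsValidMatrix (A ℓ)) → (∀ ℓ, IsValidMatrix (A' ℓ)) →
    ∀ i : Fin n, (∀ ℓ, ∀ i', i' ≠ i → A ℓ i' = A' ℓ i') →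
      ∀ ℓ, (i ∈ f A ℓ ↔ i ∈ f A' ℓ)

/-- `α`-optimality of an `(n,m,k)`-assignment mechanism. -/
def AlphaOptimalAssign {n m : ℕ} (k : ℕ)
    (f : (Fin m → Matrix (Fin n) (Fin n) ℝ) → (Fin m → Finset (Fin n)))
    (α : ℝ) : Prop :=
  ∀ A : Fin m → Matrix (Fin n) (Fin n) ℝ, (∀ ℓ, IsValidMatrix (A ℓ)) →
    α * optAssign m k A ≤ totalScore A (f A)

/-!
Arrange the `n = (k/2)·b` agents in a grid with `k/2` rows and `b` columns, and use the
wrap-around diagonals as a second partition into `k/2` classes; a row and a diagonal share at most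
one agent. The in-weight of an agent splits into its off-row and its in-row weight. In each row,
for each job, the agent with the largest off-row weight (at its best job) is selected; in each
diagonal, the agent with the largest in-row weight. Neither selection of a candidate depends on
its own votes: the off-row weights of its row are cast outside the row, and the in-row weights of
the other members of its diagonal are cast in rows it does not belong to. An agent selected twice
keeps its larger claim, so each job receives at most `k/2 + k/2` agents. A feasible assignment
collects at most the sum of both weights of its agents, each winner represents at most `b` agents
of its class, and keeping one of two claims loses a factor `2`: the ratio is `1/(2b)`.
-/

noncomputable section

namespace ImpartialAssignment

open Classical

section Winner

variable {ι α κ : Type*} [LinearOrder ι]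
  {c : ι → α} {job job' : ι → κ} {s s' : ι → ℝ} {i j : ι}

/-- Ties are broken in favour of the smaller agent. -/
def IsWinner (c : ι → α) (job : ι → κ) (s : ι → ℝ) (i : ι) : Prop :=
  ∀ j, c j = c i → job j = job i →
    toLex (s j, OrderDual.toDual j) ≤ toLex (s i, OrderDual.toDual i)

lemma IsWinner.le (h : IsWinner c job s i) (hc : c j = c i) (hjob : job j = job i) :
    s j ≤ s i :=
  Prod.Lex.monotone_fst _ _ (h j hc hjob)

lemma IsWinner.eq (hi : IsWinner c job s i) (hj : IsWinner c job s j) (hc : c i = c j)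
    (hjob : job i = job j) : i = j := by
  have h := le_antisymm (hj i hc hjob) (hi j hc.symm hjob.symm)
  simp only [toLex_inj, Prod.mk.injEq, OrderDual.toDual_inj] at h
  exact h.2

lemma exists_isWinner [Fintype ι] (c : ι → α) (job : ι → κ) (s : ι → ℝ) (j : ι) :
    ∃ w, IsWinner c job s w ∧ c w = c j ∧ job w = job j := by
  obtain ⟨w, hw, hmax⟩ := exists_max_image {i | c i = c j ∧ job i = job j}
    (fun i => toLex (s i, OrderDual.toDual i)) ⟨j, by simp⟩
  simp only [mem_filter, mem_univ, true_and] at hw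
  exact ⟨w, fun i hc hjob => hmax i (by simp [hc, hjob, hw]), hw⟩

lemma isWinner_congr (h : ∀ j, c j = c i → job j = job' j ∧ s j = s' j) :
    IsWinner c job s i ↔ IsWinner c job' s' i := by
  obtain ⟨hjob, hs⟩ := h i rfl
  refine forall_congr' fun j => ?_
  by_cases hc : c j = c i
  · rw [(h j hc).1, (h j hc).2, hjob, hs]
  · simp [hc]

lemma card_filter_isWinner_le [Fintype ι] [DecidableEq α] [DecidableEq κ] (l : κ) :
    #{i | IsWinner c job s i ∧ job i = l} ≤ #(univ.image c) :=
  card_le_card_of_injOn c (fun i _ => mem_image_of_mem c (mem_univ i)) fun i hi i' hi' hc => by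
    simp only [coe_filter, mem_univ, true_and, Set.mem_ofPred_eq] at hi hi'
    exact hi.1.eq hi'.1 hc (hi.2.trans hi'.2.symm)

/-- Each winner represents at most `b` agents, all of score at most its own. -/
lemma sum_le_mul_sum_isWinner [Fintype ι] [DecidableEq α] {b : ℕ} (hs : ∀ i, 0 ≤ s i)
    (hc : ∀ j, #{i | c i = c j} ≤ b) :
    ∑ j, s j ≤ b * ∑ i, if IsWinner c job s i then s i else 0 := by
  set t : ι → ι → ℝ := fun w j =>
    if IsWinner c job s w ∧ c j = c w ∧ job j = job w then s w else 0
  have ht : ∀ w j, 0 ≤ t w j := fun w j => by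
    simp only [t]
    split_ifs
    exacts [hs w, le_rfl]
  have hcover : ∀ j, s j ≤ ∑ w, t w j := fun j => by
    obtain ⟨w, hw, hcw, hjw⟩ := exists_isWinner c job s j
    calc s j ≤ t w j := by
          simp only [t]
          rw [if_pos ⟨hw, hcw.symm, hjw.symm⟩]
          exact hw.le hcw.symm hjw.symm
      _ ≤ ∑ w, t w j := single_le_sum (fun w _ => ht w j) (mem_univ w)
  have hfiber : ∀ w, ∑ j, t w j ≤ b * if IsWinner c job s w then s w else 0 := fun w => by
    by_cases hw : IsWinner c job s w
    · simp only [t, hw, true_and, if_true]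
      rw [← sum_filter, sum_const, nsmul_eq_mul]
      have hcard : #{j | c j = c w ∧ job j = job w} ≤ b :=
        (card_le_card fun j hj => by simp_all).trans (hc w)
      exact mul_le_mul_of_nonneg_right (by exact_mod_cast hcard) (hs w)
    · simp [t, hw]
  calc ∑ j, s j ≤ ∑ j, ∑ w, t w j := sum_le_sum fun j _ => hcover j
    _ = ∑ w, ∑ j, t w j := sum_comm
    _ ≤ ∑ w, b * if IsWinner c job s w then s w else 0 := sum_le_sum fun w _ => hfiber w
    _ = _ := (mul_sum _ _ _).symm

end Winner

lemma sum_sum_filter_eq_some {ι κ : Type*} [Fintype ι] [Fintype κ] [DecidableEq κ]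
    (a : ι → Option κ) (f : κ → ι → ℝ) :
    ∑ ℓ, ∑ i with a i = some ℓ, f ℓ i = ∑ i, (a i).elim 0 (f · i) := by
  simp only [sum_filter]
  rw [sum_comm]
  refine sum_congr rfl fun i _ => ?_
  cases a i <;> simp

variable {n : ℕ}

lemma optAssign_le_sum {m k : ℕ} {A : Fin m → Matrix (Fin n) (Fin n) ℝ} {w : Fin n → ℝ}
    (hw0 : ∀ j, 0 ≤ w j) (hw : ∀ ℓ j, ∑ i, A ℓ i j ≤ w j) :
    optAssign m k A ≤ ∑ j, w j := by
  refine csSup_le ⟨0, fun _ => ∅, ⟨fun _ => by simp, fun _ _ _ => by simp⟩, by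
    simp [totalScore, score]⟩ ?_
  rintro x ⟨X, hX, rfl⟩
  have hdisj : Set.PairwiseDisjoint ↑(univ : Finset (Fin m)) X :=
    fun ℓ _ ℓ' _ h => hX.2 ℓ ℓ' h
  calc totalScore A X = ∑ ℓ, ∑ j ∈ X ℓ, ∑ i, A ℓ i j :=
        sum_congr rfl fun ℓ _ => sum_comm
    _ ≤ ∑ ℓ, ∑ j ∈ X ℓ, w j := sum_le_sum fun ℓ _ => sum_le_sum fun j _ => hw ℓ j
    _ = ∑ j ∈ univ.biUnion X, w j := (sum_biUnion hdisj).symm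
    _ ≤ ∑ j, w j := sum_le_univ_sum_of_nonneg hw0

section Mechanism

variable {m : ℕ} {α β : Type*} [DecidableEq α] (row : Fin n → α) (diag : Fin n → β)

def offRowWeight (A : Matrix (Fin n) (Fin n) ℝ) (j : Fin n) : ℝ :=
  ∑ i with row i ≠ row j, A i j

def inRowWeight (A : Matrix (Fin n) (Fin n) ℝ) (j : Fin n) : ℝ :=
  ∑ i with row i = row j ∧ i ≠ j, A i j

lemma offRowWeight_add_inRowWeight {A : Matrix (Fin n) (Fin n) ℝ} {j : Fin n}
    (hA : A j j = 0) :
    offRowWeight row A j + inRowWeight row A j = ∑ i, A i j := by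
  rw [← sum_filter_not_add_sum_filter univ (fun i => row i = row j)]
  congr 1
  rw [inRowWeight, ← sum_erase (f := fun i => A i j) {i | row i = row j} hA]
  congr 1
  ext i
  simp only [mem_filter, mem_erase, mem_univ, true_and]
  tauto

variable {row} in
lemma offRowWeight_nonneg {A : Matrix (Fin n) (Fin n) ℝ} (hA : IsValidMatrix A) (j : Fin n) :
    0 ≤ offRowWeight row A j :=
  sum_nonneg fun i _ => hA.1 i j

variable {row} in
lemma inRowWeight_nonneg {A : Matrix (Fin n) (Fin n) ℝ} (hA : IsValidMatrix A) (j : Fin n) :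
    0 ≤ inRowWeight row A j :=
  sum_nonneg fun i _ => hA.1 i j

def bestJob {κ : Type*} [Finite κ] [Nonempty κ] (g : κ → ℝ) : κ :=
  (Finite.exists_max g).choose

lemma le_bestJob {κ : Type*} [Finite κ] [Nonempty κ] (g : κ → ℝ) (ℓ : κ) :
    g ℓ ≤ g (bestJob g) :=
  (Finite.exists_max g).choose_spec ℓ

variable [NeZero m]

section TopJob

variable (W : Matrix (Fin n) (Fin n) ℝ → Fin n → ℝ)
  (A : Fin m → Matrix (Fin n) (Fin n) ℝ)

def topJob (j : Fin n) : Fin m := bestJob fun ℓ => W (A ℓ) j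

def topScore (j : Fin n) : ℝ := W (A (topJob W A j)) j

lemma le_topScore (ℓ : Fin m) (j : Fin n) : W (A ℓ) j ≤ topScore W A j :=
  le_bestJob (fun ℓ => W (A ℓ) j) ℓ

variable {W A} in
lemma topJob_congr {A' : Fin m → Matrix (Fin n) (Fin n) ℝ} {j : Fin n}
    (h : ∀ ℓ, W (A ℓ) j = W (A' ℓ) j) :
    topJob W A j = topJob W A' j ∧ topScore W A j = topScore W A' j := by
  have hjob : topJob W A j = topJob W A' j := by
    simp only [topJob, funext h]
  exact ⟨hjob, by rw [topScore, topScore, hjob, h]⟩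

end TopJob

variable (A : Fin m → Matrix (Fin n) (Fin n) ℝ)

abbrev IsRowWinner (i : Fin n) : Prop :=
  IsWinner row (topJob (offRowWeight row) A) (topScore (offRowWeight row) A) i

abbrev IsDiagWinner (i : Fin n) : Prop :=
  IsWinner diag (topJob (inRowWeight row) A) (topScore (inRowWeight row) A) i

def rowClaim (i : Fin n) : ℝ :=
  if IsRowWinner row A i then topScore (offRowWeight row) A i else 0

def diagClaim (i : Fin n) : ℝ :=
  if IsDiagWinner row diag A i then topScore (inRowWeight row) A i else 0

def assignedJob (i : Fin n) : Option (Fin m) :=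
  if IsRowWinner row A i ∧ diagClaim row diag A i ≤ rowClaim row A i then
    some (topJob (offRowWeight row) A i)
  else if IsDiagWinner row diag A i then some (topJob (inRowWeight row) A i) else none

def mechanism (ℓ : Fin m) : Finset (Fin n) := {i | assignedJob row diag A i = some ℓ}

lemma disjoint_mechanism {ℓ ℓ' : Fin m} (h : ℓ ≠ ℓ') :
    Disjoint (mechanism row diag A ℓ) (mechanism row diag A ℓ') := by
  refine disjoint_filter.2 fun i _ hi hi' => h ?_
  rw [hi] at hi'
  exact Option.some_injective _ hi'

lemma card_mechanism_le [DecidableEq β] (ℓ : Fin m) :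
    #(mechanism row diag A ℓ) ≤ #(univ.image row) + #(univ.image diag) := by
  have hsub : mechanism row diag A ℓ ⊆
      ({i | IsRowWinner row A i ∧ topJob (offRowWeight row) A i = ℓ} : Finset (Fin n)) ∪
      ({i | IsDiagWinner row diag A i ∧ topJob (inRowWeight row) A i = ℓ} :
        Finset (Fin n)) := by
    intro i hi
    replace hi := (mem_filter.1 hi).2
    simp only [mem_union, mem_filter, mem_univ, true_and]
    unfold assignedJob at hi
    split_ifs at hi with hc hd <;> simp_all
  exact (card_le_card hsub).trans ((card_union_le _ _).trans
    (add_le_add (card_filter_isWinner_le ℓ) (card_filter_isWinner_le ℓ)))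

variable {row diag A} in
lemma assignedJob_congr (hinj : ∀ i j, row i = row j → diag i = diag j → i = j)
    {A' : Fin m → Matrix (Fin n) (Fin n) ℝ} {i₀ : Fin n}
    (h : ∀ ℓ i, i ≠ i₀ → A ℓ i = A' ℓ i) :
    assignedJob row diag A i₀ = assignedJob row diag A' i₀ := by
  have hcross : ∀ j, row j = row i₀ → topJob (offRowWeight row) A j =
      topJob (offRowWeight row) A' j ∧ topScore (offRowWeight row) A j =
      topScore (offRowWeight row) A' j := fun j hj => topJob_congr fun ℓ =>
    sum_congr rfl fun i hi => by
      rw [h ℓ i (by rintro rfl; exact (mem_filter.1 hi).2 hj.symm)]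
  -- `i₀` lies in the row of no other agent of its diagonal
  have hinner : ∀ j, diag j = diag i₀ → topJob (inRowWeight row) A j =
      topJob (inRowWeight row) A' j ∧ topScore (inRowWeight row) A j =
      topScore (inRowWeight row) A' j := fun j hj => topJob_congr fun ℓ =>
    sum_congr rfl fun i hi => by
      obtain ⟨hrow, hij⟩ := (mem_filter.1 hi).2
      rw [h ℓ i (by rintro rfl; exact hij (hinj _ _ hrow hj.symm))]
  have hc : IsRowWinner row A i₀ ↔ IsRowWinner row A' i₀ := isWinner_congr hcross
  have hd : IsDiagWinner row diag A i₀ ↔ IsDiagWinner row diag A' i₀ :=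
    isWinner_congr hinner
  simp only [assignedJob, rowClaim, diagClaim, hc, hd, (hcross i₀ rfl).1,
    (hcross i₀ rfl).2, (hinner i₀ rfl).1, (hinner i₀ rfl).2]
  congr

lemma totalScore_mechanism :
    totalScore A (mechanism row diag A) =
      ∑ i, (assignedJob row diag A i).elim 0 fun ℓ => ∑ i', A ℓ i' i := by
  rw [← sum_sum_filter_eq_some]
  exact sum_congr rfl fun ℓ _ => by rw [score]; exact sum_comm

variable {A} in
lemma rowClaim_add_diagClaim_le (hA : ∀ ℓ, IsValidMatrix (A ℓ)) (i : Fin n) :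
    rowClaim row A i + diagClaim row diag A i ≤
      2 * (assignedJob row diag A i).elim 0 fun ℓ => ∑ i', A ℓ i' i := by
  have hcross0 : 0 ≤ rowClaim row A i := by
    unfold rowClaim; split_ifs; exacts [offRowWeight_nonneg (hA _) i, le_rfl]
  have hinner0 : 0 ≤ diagClaim row diag A i := by
    unfold diagClaim; split_ifs; exacts [inRowWeight_nonneg (hA _) i, le_rfl]
  have hsum (ℓ : Fin m) := offRowWeight_add_inRowWeight row ((hA ℓ).2 i)
  have hcn (ℓ : Fin m) := offRowWeight_nonneg (row := row) (hA ℓ) i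
  have hin (ℓ : Fin m) := inRowWeight_nonneg (row := row) (hA ℓ) i
  unfold assignedJob
  split_ifs with hc hd
  · have : rowClaim row A i = topScore (offRowWeight row) A i := if_pos hc.1
    rw [topScore] at this
    simp only [Option.elim]
    linarith [hc.2, hsum (topJob (offRowWeight row) A i), hin (topJob (offRowWeight row) A i)]
  · have hi : diagClaim row diag A i = topScore (inRowWeight row) A i := if_pos hd
    rw [topScore] at hi
    have hle : rowClaim row A i ≤ diagClaim row diag A i := by
      by_cases hc' : IsRowWinner row A i
      · exact (not_le.1 fun h => hc ⟨hc', h⟩).le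
      · simp only [rowClaim, if_neg hc', hinner0]
    simp only [Option.elim]
    linarith [hsum (topJob (inRowWeight row) A i), hcn (topJob (inRowWeight row) A i)]
  · have hi : diagClaim row diag A i = 0 := if_neg hd
    have hc' : ¬ IsRowWinner row A i := fun h => hc ⟨h, hi ▸ hcross0⟩
    simp [rowClaim, if_neg hc', hi]

lemma optAssign_le_mul_totalScore_mechanism [DecidableEq β] {b : ℕ}
    (hrow : ∀ j, #{i | row i = row j} ≤ b) (hdiag : ∀ j, #{i | diag i = diag j} ≤ b)
    (hA : ∀ ℓ, IsValidMatrix (A ℓ)) (k : ℕ) :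
    optAssign m k A ≤ 2 * b * totalScore A (mechanism row diag A) := by
  have hcross := sum_le_mul_sum_isWinner (job := topJob (offRowWeight row) A)
    (s := topScore (offRowWeight row) A) (fun i => offRowWeight_nonneg (hA _) i) hrow
  have hinner := sum_le_mul_sum_isWinner (job := topJob (inRowWeight row) A)
    (s := topScore (inRowWeight row) A) (fun i => inRowWeight_nonneg (hA _) i) hdiag
  have hcol : ∀ ℓ j, ∑ i, A ℓ i j ≤
      topScore (offRowWeight row) A j + topScore (inRowWeight row) A j := fun ℓ j => by
    rw [← offRowWeight_add_inRowWeight row ((hA ℓ).2 j)]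
    exact add_le_add (le_topScore _ A ℓ j) (le_topScore _ A ℓ j)
  calc optAssign m k A
        ≤ ∑ j, (topScore (offRowWeight row) A j + topScore (inRowWeight row) A j) :=
        optAssign_le_sum (fun j => add_nonneg (offRowWeight_nonneg (hA _) j)
          (inRowWeight_nonneg (hA _) j)) hcol
    _ ≤ b * ∑ i, rowClaim row A i + b * ∑ i, diagClaim row diag A i := by
        rw [sum_add_distrib]
        exact add_le_add hcross hinner
    _ = b * ∑ i, (rowClaim row A i + diagClaim row diag A i) := by
        rw [sum_add_distrib, mul_add]
    _ ≤ b * ∑ i, 2 * (assignedJob row diag A i).elim 0 fun ℓ => ∑ i', A ℓ i' i := by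
        gcongr with i
        exact rowClaim_add_diagClaim_le row diag hA i
    _ = 2 * b * totalScore A (mechanism row diag A) := by
        rw [totalScore_mechanism, ← mul_sum, mul_left_comm, mul_assoc]

end Mechanism

section Grid

variable {b k₂ : ℕ}

def gridRow (b : ℕ) (i : Fin n) : ℕ := i / b

/-- Row `r` and column `c` of a grid with `k₂` rows and `b ≤ k₂` columns meet the wrap-around
diagonal `(r + c) % k₂`, so a row meets each diagonal at most once. -/
def gridDiag (b k₂ : ℕ) (i : Fin n) : ℕ := (i / b + i % b) % k₂

lemma eq_of_gridRow_eq_of_mod_eq {i j : Fin n} (hr : gridRow b i = gridRow b j)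
    (hm : i % b = j % b) : i = j :=
  Fin.ext (by rw [← Nat.div_add_mod i b, ← Nat.div_add_mod j b, show i / b = j / b from hr, hm])

lemma gridRow_lt (hn : n = k₂ * b) (i : Fin n) : gridRow b i < k₂ :=
  Nat.div_lt_of_lt_mul (by rw [mul_comm, ← hn]; exact i.isLt)

lemma gridRow_gridDiag_injective (hb : 0 < b) (hbk : b ≤ k₂) {i j : Fin n}
    (hr : gridRow b i = gridRow b j) (hd : gridDiag b k₂ i = gridDiag b k₂ j) : i = j := by
  refine eq_of_gridRow_eq_of_mod_eq hr (Nat.ModEq.eq_of_lt_of_lt ?_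
    ((Nat.mod_lt _ hb).trans_le hbk) ((Nat.mod_lt _ hb).trans_le hbk))
  refine Nat.ModEq.add_left_cancel' (i / b) ?_
  rw [gridDiag, gridDiag, show j / b = i / b from hr.symm] at hd
  exact hd

lemma gridRow_eq_of_mod_eq_of_gridDiag_eq (hn : n = k₂ * b) {i j : Fin n} (hm : i % b = j % b)
    (hd : gridDiag b k₂ i = gridDiag b k₂ j) : gridRow b i = gridRow b j :=
  Nat.ModEq.eq_of_lt_of_lt (Nat.ModEq.add_right_cancel' (j % b) (by
    rw [gridDiag, gridDiag, hm] at hd; exact hd)) (gridRow_lt hn i) (gridRow_lt hn j)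

lemma card_le_of_injOn_mod (hb : 0 < b) {s : Finset (Fin n)}
    (h : Set.InjOn (fun i : Fin n => (i : ℕ) % b) s) : #s ≤ b :=
  (card_le_card_of_injOn _ (fun _ _ => mem_range.2 (Nat.mod_lt _ hb)) h).trans
    (card_range b).le

lemma card_filter_gridRow_eq_le (hb : 0 < b) (j : Fin n) :
    #({i | gridRow b i = gridRow b j} : Finset (Fin n)) ≤ b :=
  card_le_of_injOn_mod hb fun i hi i' hi' hm => by
    simp only [coe_filter, mem_univ, true_and, Set.mem_ofPred_eq] at hi hi'
    exact eq_of_gridRow_eq_of_mod_eq (hi.trans hi'.symm) hm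

lemma card_filter_gridDiag_eq_le (hb : 0 < b) (hn : n = k₂ * b) (j : Fin n) :
    #({i | gridDiag b k₂ i = gridDiag b k₂ j} : Finset (Fin n)) ≤ b :=
  card_le_of_injOn_mod hb fun i hi i' hi' hm => by
    simp only [coe_filter, mem_univ, true_and, Set.mem_ofPred_eq] at hi hi'
    exact eq_of_gridRow_eq_of_mod_eq
      (gridRow_eq_of_mod_eq_of_gridDiag_eq hn hm (hi.trans hi'.symm)) hm

lemma card_image_gridRow_le (hn : n = k₂ * b) :
    #(univ.image (gridRow b : Fin n → ℕ)) ≤ k₂ :=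
  (card_le_card (image_subset_iff.2 fun i _ => mem_range.2 (gridRow_lt hn i))).trans
    (card_range k₂).le

lemma card_image_gridDiag_le (hk : 0 < k₂) :
    #(univ.image (gridDiag b k₂ : Fin n → ℕ)) ≤ k₂ :=
  (card_le_card (image_subset_iff.2 fun _ _ => mem_range.2 (Nat.mod_lt _ hk))).trans
    (card_range k₂).le

end Grid

end ImpartialAssignment

end

open ImpartialAssignment

theorem stmt15_general (n m k : ℕ) (hkn : k < n) (hdvd : k ∣ 2 * n)
    (hk2 : k % 2 = 0) (hble : 2 * n / k ≤ k / 2) :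
    ∃ f : (Fin m → Matrix (Fin n) (Fin n) ℝ) → (Fin m → Finset (Fin n)),
      (∀ A, FeasibleAssignment m k (f A)) ∧ ImpartialAssign f ∧
      AlphaOptimalAssign k f (1 / (2 * ((2 * n / k : ℕ) : ℝ))) := by
  obtain _ | m := m
  · refine ⟨fun _ _ => ∅, fun _ => ⟨Fin.elim0, fun ℓ => ℓ.elim0⟩,
      fun _ _ _ _ _ _ => Fin.elim0, fun A _ => ?_⟩
    have hopt : optAssign 0 k A ≤ 0 := by
      simpa using optAssign_le_sum (w := 0) (fun _ => le_rfl) fun ℓ => ℓ.elim0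
    simpa [totalScore] using mul_nonpos_of_nonneg_of_nonpos (by positivity) hopt
  obtain ⟨k₂, rfl⟩ : ∃ k₂, k = 2 * k₂ := ⟨k / 2, by omega⟩
  set b := 2 * n / (2 * k₂)
  have hk : 0 < k₂ := Nat.pos_of_ne_zero fun h => by simp [h] at hdvd; omega
  have hn : n = k₂ * b := by
    have := Nat.div_mul_cancel hdvd
    rw [← mul_left_cancel_iff_of_pos two_pos, ← this]; ring
  have hb : 0 < b := Nat.pos_of_ne_zero fun h => by simp [h] at hn; omega
  have hbk : b ≤ k₂ := by simpa using hble
  refine ⟨mechanism (gridRow b) (gridDiag b k₂), fun A => ⟨fun ℓ => ?_,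
    fun ℓ ℓ' => disjoint_mechanism _ _ A⟩, fun A A' _ _ i h ℓ => ?_, fun A hA => ?_⟩
  · have := card_mechanism_le (gridRow b) (gridDiag b k₂) A ℓ
    have := card_image_gridRow_le (n := n) hn
    have := card_image_gridDiag_le (n := n) (b := b) hk
    omega
  · simp only [mechanism, mem_filter, mem_univ, true_and,
      assignedJob_congr (fun _ _ => gridRow_gridDiag_injective hb hbk) h]
  · have := optAssign_le_mul_totalScore_mechanism (gridRow b) (gridDiag b k₂) A
      (card_filter_gridRow_eq_le hb) (card_filter_gridDiag_eq_le hb hn) hA (2 * k₂)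
    rw [one_div, inv_mul_le_iff₀ (by positivity)]
    exact this

/-- For `k < n`, `m·k ≤ n`, `b := 2n/k ∈ ℕ`, `k` even and `b ≤ k/2`, there exists
an impartial and `1/(2b)`-optimal `(n,m,k)`-assignment mechanism. -/
theorem stmt15 (n m k : ℕ) (hkn : k < n) (hmk : m * k ≤ n) (hdvd : k ∣ 2 * n)
    (hk2 : k % 2 = 0) (hble : 2 * n / k ≤ k / 2) :
    ∃ f : (Fin m → Matrix (Fin n) (Fin n) ℝ) → (Fin m → Finset (Fin n)),
      (∀ A, FeasibleAssignment m k (f A)) ∧ ImpartialAssign f ∧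
      AlphaOptimalAssign k f (1 / (2 * ((2 * n / k : ℕ) : ℝ))) :=
  stmt15_general n m k hkn hdvd hk2 hble
end

section
/- Let n ∈ ℕ, m ∈ ℕ, let A_1, …, A_m be n×n matrices with nonnegative real entries and zero diagonal, and let k̃, k ∈ ℕ with 1 ≤ k̃ ≤ k ≤ n. Then (1/k) · max_{(X_1,…,X_m) ∈ 𝒳_k} ∑_{ℓ∈[m]} σ(X_ℓ; A_ℓ) ≤ (1/k̃) · max_{(X_1,…,X_m) ∈ 𝒳_{k̃}} ∑_{ℓ∈[m]} σ(X_ℓ; A_ℓ), where 𝒳_j denotes the set of tuples (X_1,…,X_m) of pairwise disjoint subsets of [n] each of cardinality at most j, and σ(S;A) := ∑_{i∈[n], j∈S} A_{ij}. -/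
open Finset

lemma exists_top {α : Type*} [DecidableEq α] (w : α → ℝ) :
    ∀ (r : ℕ) (S : Finset α), r ≤ S.card →
    ∃ T ⊆ S, T.card = r ∧ ∀ a ∈ T, ∀ b ∈ S, b ∉ T → w b ≤ w a := by
  intro r
  induction r with
  | zero => intro S _; exact ⟨∅, Finset.empty_subset S, rfl, by simp⟩
  | succ r ih =>
    intro S hr
    have hS : S.Nonempty := Finset.card_pos.mp (by omega)
    obtain ⟨x, hxS, hx⟩ := Finset.exists_max_image S w hS
    have hcard : r ≤ (S.erase x).card := by
      rw [Finset.card_erase_of_mem hxS]; omega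
    obtain ⟨T', hT'sub, hT'card, hT'⟩ := ih (S.erase x) hcard
    have hxT' : x ∉ T' := fun h => (Finset.notMem_erase x S) (hT'sub h)
    refine ⟨insert x T', ?_, ?_, ?_⟩
    · intro a ha
      rcases Finset.mem_insert.mp ha with h | h
      · exact h ▸ hxS
      · exact Finset.mem_of_mem_erase (hT'sub h)
    · rw [Finset.card_insert_of_notMem hxT', hT'card]
    · intro a ha b hb hbT
      rcases Finset.mem_insert.mp ha with h | h
      · exact h ▸ hx b hb
      · exact hT' a h b (Finset.mem_erase.mpr
          ⟨fun hbx => hbT (hbx ▸ Finset.mem_insert_self x T'), hb⟩)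
          (fun hbT' => hbT (Finset.mem_insert_of_mem hbT'))

lemma top_sum {α : Type*} [DecidableEq α] (w : α → ℝ) (S T : Finset α)
    (hsub : T ⊆ S) (hw : ∀ a ∈ S, 0 ≤ w a)
    (htop : ∀ a ∈ T, ∀ b ∈ S, b ∉ T → w b ≤ w a) :
    (T.card : ℝ) * ∑ a ∈ S, w a ≤ (S.card : ℝ) * ∑ a ∈ T, w a := by
  rcases T.eq_empty_or_nonempty with rfl | hTne
  · simp
  obtain ⟨a, haT, ha⟩ := Finset.exists_min_image T w hTne
  have wa0 : 0 ≤ w a := hw a (hsub haT)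
  have hd : ∑ b ∈ S \ T, w b ≤ ((S \ T).card : ℝ) * w a := by
    have := Finset.sum_le_card_nsmul (S \ T) w (w a)
      (fun b hb => by
        have hb' := Finset.mem_sdiff.mp hb
        exact htop a haT b hb'.1 hb'.2)
    simpa [nsmul_eq_mul] using this
  have hr : (T.card : ℝ) * w a ≤ ∑ b ∈ T, w b := by
    have := Finset.card_nsmul_le_sum T w (w a) (fun b hb => ha b hb)
    simpa [nsmul_eq_mul] using this
  have hsplit : ∑ b ∈ S \ T, w b + ∑ b ∈ T, w b = ∑ b ∈ S, w b :=
    Finset.sum_sdiff hsub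
  have hcards : ((S \ T).card : ℝ) + (T.card : ℝ) = (S.card : ℝ) := by
    have := Finset.card_sdiff_add_card_eq_card hsub
    exact_mod_cast congrArg (Nat.cast : ℕ → ℝ) this
  have hT0 : 0 ≤ ∑ b ∈ T, w b := Finset.sum_nonneg fun b hb => hw b (hsub hb)
  set sd := ∑ b ∈ S \ T, w b
  set st := ∑ b ∈ T, w b
  have h1 : (T.card : ℝ) * sd ≤ (T.card : ℝ) * (((S \ T).card : ℝ) * w a) :=
    mul_le_mul_of_nonneg_left hd (Nat.cast_nonneg _)
  have h2 : ((S \ T).card : ℝ) * ((T.card : ℝ) * w a) ≤ ((S \ T).card : ℝ) * st :=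
    mul_le_mul_of_nonneg_left hr (Nat.cast_nonneg _)
  nlinarith [h1, h2]

lemma shrink {α : Type*} [DecidableEq α] (w : α → ℝ) (S : Finset α) (k ktil : ℕ)
    (hk : S.card ≤ k) (hkk : ktil ≤ k) (hw : ∀ a ∈ S, 0 ≤ w a) :
    ∃ T ⊆ S, T.card ≤ ktil ∧ (ktil : ℝ) * ∑ a ∈ S, w a ≤ (k : ℝ) * ∑ a ∈ T, w a := by
  by_cases h : S.card ≤ ktil
  · refine ⟨S, le_refl S, h, ?_⟩
    have h0 : 0 ≤ ∑ a ∈ S, w a := Finset.sum_nonneg hw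
    have hc : (ktil : ℝ) ≤ (k : ℝ) := Nat.cast_le.mpr hkk
    nlinarith
  · obtain ⟨T, hsub, hcard, htop⟩ := exists_top w ktil S (by omega)
    refine ⟨T, hsub, hcard.le, ?_⟩
    have key := top_sum w S T hsub hw htop
    rw [hcard] at key
    have hc : (S.card : ℝ) ≤ (k : ℝ) := Nat.cast_le.mpr hk
    have h2 : 0 ≤ ∑ a ∈ T, w a := Finset.sum_nonneg fun a ha => hw a (hsub ha)
    nlinarith

/-- The per-slot value of an optimal assignment with capacity `k` per job is at
most the per-slot value of an optimal assignment with the smaller capacity `k̃`: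
`k̃ · opt_k ≤ k · opt_k̃`. -/
theorem stmt17 (n m : ℕ) (A : Fin m → Matrix (Fin n) (Fin n) ℝ)
    (hA : ∀ ℓ, IsValidMatrix (A ℓ))
    (ktil k : ℕ) (h1 : 1 ≤ ktil) (h2 : ktil ≤ k) (h3 : k ≤ n) :
    (ktil : ℝ) * optAssign m k A ≤ (k : ℝ) * optAssign m ktil A := by
  classical
  -- column-weight function
  set w : Fin m → Fin n → ℝ := fun ℓ j => ∑ i, A ℓ i j with hw
  have hw0 : ∀ ℓ j, 0 ≤ w ℓ j := fun ℓ j =>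
    Finset.sum_nonneg fun i _ => (hA ℓ).1 i j
  have hscore : ∀ ℓ (S : Finset (Fin n)), score (A ℓ) S = ∑ j ∈ S, w ℓ j := by
    intro ℓ S
    exact Finset.sum_comm
  -- the feasible-value sets
  set Sset : ℕ → Set ℝ := fun c => {x : ℝ | ∃ X : Fin m → Finset (Fin n),
    FeasibleAssignment m c X ∧ totalScore A X = x} with hSset
  have hne : ∀ c, (Sset c).Nonempty := by
    intro c
    refine ⟨0, fun _ => ∅, ⟨fun ℓ => by simp, fun _ _ _ => by simp⟩, ?_⟩
    simp [totalScore, score]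
  have hbdd : ∀ c, BddAbove (Sset c) := by
    intro c
    refine ⟨∑ ℓ, ∑ j, w ℓ j, ?_⟩
    rintro x ⟨X, hX, rfl⟩
    refine Finset.sum_le_sum fun ℓ _ => ?_
    rw [hscore]
    exact Finset.sum_le_sum_of_subset_of_nonneg (Finset.subset_univ _)
      (fun j _ _ => hw0 ℓ j)
  have hktpos : (0 : ℝ) < (ktil : ℝ) := by exact_mod_cast h1
  -- key: every capacity-k value is bounded
  have key : ∀ x ∈ Sset k, (ktil : ℝ) * x ≤ (k : ℝ) * optAssign m ktil A := by
    rintro x ⟨X, ⟨hXcard, hXdisj⟩, rfl⟩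
    choose T hTsub hTcard hTval using fun ℓ =>
      shrink (w ℓ) (X ℓ) k ktil (hXcard ℓ) h2 (fun a _ => hw0 ℓ a)
    have hTfeas : FeasibleAssignment m ktil T :=
      ⟨hTcard, fun ℓ ℓ' hll =>
        (hXdisj ℓ ℓ' hll).mono (hTsub ℓ) (hTsub ℓ')⟩
    have hmem : totalScore A T ∈ Sset ktil := ⟨T, hTfeas, rfl⟩
    have hle : totalScore A T ≤ optAssign m ktil A := le_csSup (hbdd ktil) hmem
    have hsum : (ktil : ℝ) * totalScore A X ≤ (k : ℝ) * totalScore A T := by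
      unfold totalScore
      rw [Finset.mul_sum, Finset.mul_sum]
      refine Finset.sum_le_sum fun ℓ _ => ?_
      rw [hscore, hscore]
      exact hTval ℓ
    have hk0 : (0 : ℝ) ≤ (k : ℝ) := Nat.cast_nonneg k
    nlinarith [mul_le_mul_of_nonneg_left hle hk0]
  have hopt : optAssign m k A ≤ ((k : ℝ) * optAssign m ktil A) / (ktil : ℝ) := by
    refine csSup_le (hne k) fun x hx => ?_
    rw [le_div_iff₀ hktpos]
    calc x * (ktil : ℝ) = (ktil : ℝ) * x := mul_comm _ _
      _ ≤ _ := key x hx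
  calc (ktil : ℝ) * optAssign m k A
      ≤ (ktil : ℝ) * (((k : ℝ) * optAssign m ktil A) / (ktil : ℝ)) :=
        mul_le_mul_of_nonneg_left hopt hktpos.le
    _ = (k : ℝ) * optAssign m ktil A := by
        field_simp
end
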